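/- arXiv:1007.1617 — 15 statements merged into one kernel-verified Lean document; each statement's English description precedes it below -/
import Mathlib

section
/- Let A, B be real numbers, not both zero, and let (x, y) be a solution of the system x'(s) = x(s)y(s) + A, y'(s) = -x(s)^2 - B on all of ℝ. Define θ(s) = θ₀ + ∫₀^s x(s') ds' and define the plane curve X : ℝ → ℂ by X(s) = e^{iθ(s)} (x(s) + i y(s))/(A - iB). Then X'(s) = e^{iθ(s)} for all s; in particular X is parametrized by arc length (‖X'(s)‖ = 1 for all s) and its signed curvature θ'(s) equals x(s). -/
/-!
Writing `z = x + i y`, the system reads `z' = -i x z + (A - iB)`. Since `θ' = x`, the rotated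
function `e^{iθ} z` has derivative `e^{iθ}(i x z + z') = e^{iθ}(A - iB)`, so dividing by the
nonzero constant `A - iB` gives `X' = e^{iθ}`, which has modulus one.
-/

open Complex

lemma hasDerivAt_add_integral_of_continuous {f : ℝ → ℝ} (hf : Continuous f) (c s : ℝ) :
    HasDerivAt (fun s => c + ∫ t in (0 : ℝ)..s, f t) (f s) s := by
  simpa using (hf.integral_hasStrictDerivAt 0 s).hasDerivAt.const_add c

lemma hasDerivAt_ofReal_add_I_mul_ofReal {x y : ℝ → ℝ} {A B s : ℝ}
    (hx : HasDerivAt x (x s * y s + A) s) (hy : HasDerivAt y (-(x s) ^ 2 - B) s) :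
    HasDerivAt (fun s => (x s : ℂ) + I * y s)
      (-I * x s * ((x s : ℂ) + I * y s) + ((A : ℂ) - I * B)) s := by
  refine (hx.ofReal_comp.add (hy.ofReal_comp.const_mul I)).congr_deriv ?_
  push_cast
  ring_nf
  rw [I_sq]
  ring

lemma hasDerivAt_exp_I_mul_mul {θ κ : ℝ → ℝ} {z : ℝ → ℂ} {c : ℂ} {s : ℝ}
    (hθ : HasDerivAt θ (κ s) s) (hz : HasDerivAt z (-I * κ s * z s + c) s) :
    HasDerivAt (fun s => exp (I * θ s) * z s) (exp (I * θ s) * c) s := by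
  refine ((hθ.ofReal_comp.const_mul I).cexp.mul hz).congr_deriv ?_
  ring

/-- If `(x, y)` solves `x' = xy + A`, `y' = -x² - B` on all of `ℝ`,
`θ(s) = θ₀ + ∫₀^s x`, and `X(s) = e^{iθ(s)}(x(s) + i y(s))/(A - iB)`, then
`X'(s) = e^{iθ(s)}` for all `s`; in particular `X` is unit-speed and its signed
curvature `θ'(s)` equals `x(s)`. -/
theorem stmt_0 (A B : ℝ) (hAB : A ≠ 0 ∨ B ≠ 0)
    (x y : ℝ → ℝ)
    (hx : ∀ s, HasDerivAt x (x s * y s + A) s)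
    (hy : ∀ s, HasDerivAt y (-(x s) ^ 2 - B) s)
    (θ₀ : ℝ) (θ : ℝ → ℝ)
    (hθ : ∀ s, θ s = θ₀ + ∫ t in (0:ℝ)..s, x t)
    (X : ℝ → ℂ)
    (hX : ∀ s, X s = Complex.exp (Complex.I * (θ s : ℂ)) *
      ((x s : ℂ) + Complex.I * (y s : ℂ)) / ((A : ℂ) - Complex.I * (B : ℂ))) :
    (∀ s, HasDerivAt X (Complex.exp (Complex.I * (θ s : ℂ))) s) ∧
    (∀ s, ‖Complex.exp (Complex.I * (θ s : ℂ))‖ = 1) ∧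
    (∀ s, HasDerivAt θ (x s) s) := by
  have hθ' : ∀ s, HasDerivAt θ (x s) s := by
    rw [funext hθ]
    exact hasDerivAt_add_integral_of_continuous
      (continuous_iff_continuousAt.2 fun s => (hx s).continuousAt) θ₀
  have hc : (A : ℂ) - I * B ≠ 0 := by
    intro h
    have h' := Complex.ext_iff.1 h
    simp only [sub_re, sub_im, mul_re, mul_im, ofReal_re, ofReal_im, I_re, I_im, zero_re,
      zero_im] at h'
    rcases hAB with hA | hB
    · exact hA (by linarith [h'.1])
    · exact hB (by linarith [h'.2])
  refine ⟨fun s => ?_, fun s => norm_exp_I_mul_ofReal (θ s), hθ'⟩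
  rw [funext hX]
  refine ((hasDerivAt_exp_I_mul_mul (hθ' s)
    (hasDerivAt_ofReal_add_I_mul_ofReal (hx s) (hy s))).div_const _).congr_deriv ?_
  field_simp
end

section
/- Let A, B be real numbers and let (x, y) be a solution of the system x'(s) = x(s)y(s) + A, y'(s) = -x(s)^2 - B on an interval containing 0. Then for all s in that interval, √(x(s)² + y(s)²) ≤ √(x(0)² + y(0)²) + √(A² + B²)·|s|. In particular, solutions cannot blow up in finite time. -/
/-!
Along the flow, `d/ds (x² + y²) = 2 (A x - B y)`: the quadratic terms of the vector field are
orthogonal to `(x, y)`, so only the constant part `(A, -B)` can change the radius. By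
Cauchy–Schwarz the radius `√(x² + y²)` therefore has speed at most `√(A² + B²)`. To apply the
mean value theorem where the radius vanishes, one works with `√(x² + y² + ε)` and lets `ε → 0`.
-/

open Filter Topology

theorem abs_sqrt_add_sub_sqrt_add_le {q q' : ℝ → ℝ} {I : Set ℝ} {C ε a b : ℝ}
    (hI : Convex ℝ I) (hq : ∀ t ∈ I, HasDerivWithinAt q (q' t) I t) (hq0 : ∀ t ∈ I, 0 ≤ q t)
    (hC : 0 ≤ C) (hq' : ∀ t ∈ I, |q' t| ≤ 2 * C * √(q t)) (hε : 0 < ε) (ha : a ∈ I)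
    (hb : b ∈ I) : |√(q b + ε) - √(q a + ε)| ≤ C * |b - a| := by
  have hpos : ∀ t ∈ I, 0 < q t + ε := fun t ht => by linarith [hq0 t ht]
  have hderiv : ∀ t ∈ I, HasDerivWithinAt (fun u => √(q u + ε))
      (q' t / (2 * √(q t + ε))) I t := fun t ht =>
    ((hq t ht).add_const ε).sqrt (hpos t ht).ne'
  have hbound : ∀ t ∈ I, ‖q' t / (2 * √(q t + ε))‖ ≤ C := by
    intro t ht
    have hsqrt_pos : 0 < 2 * √(q t + ε) := mul_pos two_pos (Real.sqrt_pos.mpr (hpos t ht))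
    rw [Real.norm_eq_abs, abs_div, abs_of_pos hsqrt_pos, div_le_iff₀ hsqrt_pos]
    calc |q' t| ≤ 2 * C * √(q t) := hq' t ht
      _ ≤ 2 * C * √(q t + ε) := by gcongr; linarith
      _ = C * (2 * √(q t + ε)) := by ring
  exact hI.norm_image_sub_le_of_norm_hasDerivWithin_le hderiv hbound ha hb

theorem sqrt_le_sqrt_add_mul_abs_sub {q q' : ℝ → ℝ} {I : Set ℝ} {C a b : ℝ}
    (hI : Convex ℝ I) (hq : ∀ t ∈ I, HasDerivWithinAt q (q' t) I t) (hq0 : ∀ t ∈ I, 0 ≤ q t)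
    (hC : 0 ≤ C) (hq' : ∀ t ∈ I, |q' t| ≤ 2 * C * √(q t)) (ha : a ∈ I) (hb : b ∈ I) :
    √(q b) ≤ √(q a) + C * |b - a| := by
  have hlim : Tendsto (fun ε => √(q a + ε) + C * |b - a|) (𝓝[>] 0)
      (𝓝 (√(q a) + C * |b - a|)) := by
    have hcont : Continuous fun ε => √(q a + ε) + C * |b - a| := by fun_prop
    simpa using (hcont.tendsto 0).mono_left nhdsWithin_le_nhds
  refine ge_of_tendsto hlim (eventually_nhdsWithin_of_forall fun ε (hε : 0 < ε) => ?_)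
  have hb_le : √(q b) ≤ √(q b + ε) := Real.sqrt_le_sqrt (by linarith)
  have hlip := abs_sub_le_iff.mp (abs_sqrt_add_sub_sqrt_add_le hI hq hq0 hC hq' hε ha hb)
  linarith [hlip.1]

theorem abs_mul_sub_mul_le_sqrt_mul_sqrt (A B x y : ℝ) :
    |A * x - B * y| ≤ √(A ^ 2 + B ^ 2) * √(x ^ 2 + y ^ 2) := by
  rw [← Real.sqrt_mul (by positivity)]
  exact Real.abs_le_sqrt (by nlinarith [sq_nonneg (A * y + B * x)])

theorem hasDerivWithinAt_sq_add_sq {x y : ℝ → ℝ} {I : Set ℝ} {A B s : ℝ}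
    (hx : HasDerivWithinAt x (x s * y s + A) I s) (hy : HasDerivWithinAt y (-(x s) ^ 2 - B) I s) :
    HasDerivWithinAt (fun t => x t ^ 2 + y t ^ 2) (2 * (A * x s - B * y s)) I s := by
  refine ((hx.fun_pow 2).add (hy.fun_pow 2)).congr_deriv ?_
  push_cast
  ring

/-- If `(x, y)` solves `x' = xy + A`, `y' = -x² - B` on an interval `I`
containing `0`, then for all `s ∈ I`,
`√(x(s)² + y(s)²) ≤ √(x(0)² + y(0)²) + √(A² + B²)·|s|`. -/
theorem stmt_2 (A B : ℝ) (x y : ℝ → ℝ)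
    (I : Set ℝ) (hI : I.OrdConnected) (h0 : (0:ℝ) ∈ I)
    (hx : ∀ s ∈ I, HasDerivWithinAt x (x s * y s + A) I s)
    (hy : ∀ s ∈ I, HasDerivWithinAt y (-(x s) ^ 2 - B) I s) :
    ∀ s ∈ I, Real.sqrt ((x s) ^ 2 + (y s) ^ 2) ≤
      Real.sqrt ((x 0) ^ 2 + (y 0) ^ 2) + Real.sqrt (A ^ 2 + B ^ 2) * |s| := by
  intro s hs
  have hspeed : ∀ t ∈ I, |2 * (A * x t - B * y t)| ≤
      2 * √(A ^ 2 + B ^ 2) * √(x t ^ 2 + y t ^ 2) := fun t _ => by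
    rw [abs_mul, abs_two, mul_assoc]
    gcongr
    exact abs_mul_sub_mul_le_sqrt_mul_sqrt A B (x t) (y t)
  simpa using sqrt_le_sqrt_add_mul_abs_sub hI.convex
    (fun t ht => hasDerivWithinAt_sq_add_sq (hx t ht) (hy t ht)) (fun t _ => by positivity)
    (Real.sqrt_nonneg _) hspeed h0 hs
end

section
/- Let A > 0 and B ≥ 0, and let (x, y) solve x'(s) = x(s)y(s) + A, y'(s) = -x(s)^2 - B on ℝ. Then x has at most one zero; moreover if x(s₀) = 0, then x(s) < 0 for all s < s₀ and x(s) > 0 for all s > s₀. -/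
/-!
With `Y` an antiderivative of `y`, the integrating factor `exp (-Y)` turns `x' = x y + A` into
`(x e^{-Y})' = A e^{-Y} > 0`. So `x e^{-Y}` is strictly increasing, and `x` has its sign.
-/

open Real

theorem exists_pos_strictMono_mul_of_hasDerivAt {x y a : ℝ → ℝ} (hy : Continuous y)
    (ha : ∀ s, 0 < a s) (hx : ∀ s, HasDerivAt x (x s * y s + a s) s) :
    ∃ c : ℝ → ℝ, (∀ s, 0 < c s) ∧ StrictMono (fun s => x s * c s) := by
  set Y : ℝ → ℝ := fun s => ∫ t in (0 : ℝ)..s, y t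
  have hY : ∀ s, HasDerivAt Y (y s) s := fun s =>
    (hy.integral_hasStrictDerivAt 0 s).hasDerivAt
  refine ⟨fun s => exp (-Y s), fun s => exp_pos _, strictMono_of_hasDerivAt_pos
    (f' := fun s => a s * exp (-Y s)) (fun s => ?_) fun s => mul_pos (ha s) (exp_pos _)⟩
  exact ((hx s).mul (hY s).fun_neg.exp).congr_deriv (by ring)

theorem neg_pos_of_strictMono_mul {f c : ℝ → ℝ} (hc : ∀ s, 0 < c s)
    (hmono : StrictMono (fun s => f s * c s)) {s₀ : ℝ} (h₀ : f s₀ = 0) :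
    (∀ s < s₀, f s < 0) ∧ (∀ s > s₀, 0 < f s) := by
  have hfc₀ : f s₀ * c s₀ = 0 := by rw [h₀, zero_mul]
  refine ⟨fun s hs => ?_, fun s hs => ?_⟩
  · have : f s * c s < 0 := hfc₀ ▸ hmono hs
    exact neg_of_mul_neg_left this (hc s).le
  · have : 0 < f s * c s := hfc₀ ▸ hmono hs
    exact pos_of_mul_pos_left this (hc s).le

theorem stmt_4_general (A B : ℝ) (hA : 0 < A) (x y : ℝ → ℝ)
    (hx : ∀ s, HasDerivAt x (x s * y s + A) s)
    (hy : ∀ s, HasDerivAt y (-(x s) ^ 2 - B) s) :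
    (∀ s₁ s₂, x s₁ = 0 → x s₂ = 0 → s₁ = s₂) ∧
    (∀ s₀, x s₀ = 0 → (∀ s < s₀, x s < 0) ∧ (∀ s > s₀, x s > 0)) := by
  have hy_cont : Continuous y := continuous_iff_continuousAt.mpr fun s => (hy s).continuousAt
  obtain ⟨c, hc, hmono⟩ := exists_pos_strictMono_mul_of_hasDerivAt hy_cont (fun _ => hA) hx
  have hsign := fun s₀ (h₀ : x s₀ = 0) => neg_pos_of_strictMono_mul hc hmono h₀
  refine ⟨fun s₁ s₂ h₁ h₂ => ?_, hsign⟩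
  rcases lt_trichotomy s₁ s₂ with h | h | h
  · exact absurd h₁ ((hsign s₂ h₂).1 s₁ h).ne
  · exact h
  · exact absurd h₁ ((hsign s₂ h₂).2 s₁ h).ne'

/-- If `A > 0`, `B ≥ 0` and `(x, y)` solves `x' = xy + A`, `y' = -x² - B`
on `ℝ`, then `x` has at most one zero; moreover if `x(s₀) = 0` then `x < 0` before `s₀`
and `x > 0` after `s₀`. -/
theorem stmt_4 (A B : ℝ) (hA : 0 < A) (hB : 0 ≤ B) (x y : ℝ → ℝ)
    (hx : ∀ s, HasDerivAt x (x s * y s + A) s)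
    (hy : ∀ s, HasDerivAt y (-(x s) ^ 2 - B) s) :
    (∀ s₁ s₂, x s₁ = 0 → x s₂ = 0 → s₁ = s₂) ∧
    (∀ s₀, x s₀ = 0 → (∀ s < s₀, x s < 0) ∧ (∀ s > s₀, x s > 0)) :=
  stmt_4_general A B hA x y hx hy
end

section
/- Let A > 0 and B ≥ 0, and let (x, y) solve x'(s) = x(s)y(s) + A, y'(s) = -x(s)^2 - B on ℝ. Then x is bounded: there exists M such that |x(s)| ≤ M for all s ∈ ℝ. -/
/-!
The system is invariant under `(x, y)(s) ↦ (-x(-s), -y(-s))`, so it suffices to bound `x` on some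
half-line `[s₀, ∞)`; on the compact gap between the two half-lines continuity does the rest.
Since `y' ≤ -x² ≤ 0`, `y` is antitone. If `y(s₁) = -ε < 0`, then `y ≤ -ε` after `s₁`, and the levels
`min (x s₁) 0` and `max (x s₁) (A / ε + 1)` are barriers for `x' = xy + A`. If `y ≥ 0` throughout,
then `x < 0` throughout (once `x ≥ 0`, it stays so with `x' ≥ A`, and `y' ≤ -A²` eventually makes
`y` negative); hence `x' ≤ A`, and a value `x(s) < -(A + y(0) + 1)` would keep
`x² ≥ y(0) + 1` on `[s, s + 1]`, forcing `y(s + 1) < 0`.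
-/

open Set

section MeanValue

variable {f f' : ℝ → ℝ} {a b c : ℝ}

theorem sub_le_mul_sub_of_hasDerivAt_le (hf : ∀ t, HasDerivAt f (f' t) t) (hab : a ≤ b)
    (hc : ∀ t ∈ Icc a b, f' t ≤ c) : f b - f a ≤ c * (b - a) :=
  (convex_Icc a b).image_sub_le_mul_sub_of_deriv_le
    (fun t _ => (hf t).continuousAt.continuousWithinAt)
    (fun t _ => (hf t).differentiableAt.differentiableWithinAt)
    (fun t ht => (hf t).deriv ▸ hc t (interior_subset ht)) a ⟨le_rfl, hab⟩ b ⟨hab, le_rfl⟩ hab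

theorem mul_sub_le_sub_of_le_hasDerivAt (hf : ∀ t, HasDerivAt f (f' t) t) (hab : a ≤ b)
    (hc : ∀ t ∈ Icc a b, c ≤ f' t) : c * (b - a) ≤ f b - f a :=
  (convex_Icc a b).mul_sub_le_image_sub_of_le_deriv
    (fun t _ => (hf t).continuousAt.continuousWithinAt)
    (fun t _ => (hf t).differentiableAt.differentiableWithinAt)
    (fun t ht => (hf t).deriv ▸ hc t (interior_subset ht)) a ⟨le_rfl, hab⟩ b ⟨hab, le_rfl⟩ hab

end MeanValue

section Barrier

variable {f f' : ℝ → ℝ} {a c : ℝ}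

theorem le_of_hasDerivAt_pos_of_eq (hf : ∀ t, HasDerivAt f (f' t) t) (ha : c ≤ f a)
    (hc : ∀ t, a ≤ t → f t = c → 0 < f' t) {s : ℝ} (hs : a ≤ s) : c ≤ f s :=
  image_le_of_deriv_right_lt_deriv_boundary' (f' := fun _ => 0) continuousOn_const
    (fun _ _ => hasDerivWithinAt_const _ _ _) ha
    (fun t _ => (hf t).continuousAt.continuousWithinAt) (fun t _ => (hf t).hasDerivWithinAt)
    (fun t ht h => hc t ht.1 h.symm) ⟨hs, le_rfl⟩

theorem le_of_hasDerivAt_neg_of_eq (hf : ∀ t, HasDerivAt f (f' t) t) (ha : f a ≤ c)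
    (hc : ∀ t, a ≤ t → f t = c → f' t < 0) {s : ℝ} (hs : a ≤ s) : f s ≤ c :=
  image_le_of_deriv_right_lt_deriv_boundary' (B' := fun _ => 0)
    (fun t _ => (hf t).continuousAt.continuousWithinAt) (fun t _ => (hf t).hasDerivWithinAt) ha
    continuousOn_const (fun _ _ => hasDerivWithinAt_const _ _ _)
    (fun t ht h => hc t ht.1 h) ⟨hs, le_rfl⟩

end Barrier

section System

variable {A B : ℝ} {x y : ℝ → ℝ}

theorem sub_le_of_le_sq (hB : 0 ≤ B) (hy : ∀ s, HasDerivAt y (-(x s) ^ 2 - B) s) {a b δ : ℝ}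
    (hab : a ≤ b) (hδ : ∀ t ∈ Icc a b, δ ≤ x t ^ 2) : y b ≤ y a - δ * (b - a) := by
  linarith [sub_le_mul_sub_of_hasDerivAt_le hy hab (c := -δ) fun t ht => by linarith [hδ t ht]]

theorem antitone_of_hasDerivAt (hB : 0 ≤ B) (hy : ∀ s, HasDerivAt y (-(x s) ^ 2 - B) s) :
    Antitone y := fun a b hab => by
  linarith [sub_le_of_le_sq hB hy hab (δ := 0) fun t _ => sq_nonneg (x t)]

theorem exists_forall_ge_abs_le_of_neg (hA : 0 < A)
    (hx : ∀ s, HasDerivAt x (x s * y s + A) s) (hy : Antitone y) {s₁ : ℝ} (hs₁ : y s₁ < 0) :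
    ∃ M, ∀ s, s₁ ≤ s → |x s| ≤ M := by
  set ε := -y s₁
  have hε_pos : 0 < ε := by linarith
  have hy_le : ∀ s, s₁ ≤ s → y s ≤ -ε := fun s hs => by linarith [hy hs]
  set lo := min (x s₁) 0
  set hi := max (x s₁) (A / ε + 1)
  have h_lo : ∀ s, s₁ ≤ s → lo ≤ x s :=
    fun s => le_of_hasDerivAt_pos_of_eq hx (min_le_left _ _) fun t ht hxt => by
      have : x t ≤ 0 := hxt ▸ min_le_right _ _
      nlinarith [hy_le t ht]
  have h_hi : ∀ s, s₁ ≤ s → x s ≤ hi :=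
    fun s => le_of_hasDerivAt_neg_of_eq hx (le_max_left _ _) fun t ht hxt => by
      have h₁ : A / ε + 1 ≤ x t := hxt ▸ le_max_right _ _
      have h₂ : A < x t * ε := by
        rw [div_add_one hε_pos.ne', div_le_iff₀ hε_pos] at h₁
        linarith
      nlinarith [hy_le t ht]
  exact ⟨max hi (-lo), fun s hs =>
    abs_le.2 ⟨by linarith [h_lo s hs, le_max_right hi (-lo)], (h_hi s hs).trans (le_max_left _ _)⟩⟩

theorem neg_of_forall_nonneg (hA : 0 < A) (hB : 0 ≤ B)
    (hx : ∀ s, HasDerivAt x (x s * y s + A) s) (hy : ∀ s, HasDerivAt y (-(x s) ^ 2 - B) s)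
    (hy₀ : ∀ s, 0 ≤ y s) (s : ℝ) : x s < 0 := by
  by_contra! hxs
  have h_nonneg : ∀ t, s ≤ t → 0 ≤ x t :=
    fun t => le_of_hasDerivAt_pos_of_eq hx hxs fun u _ hxu => by simpa [hxu]
  have h_grow : ∀ t, s ≤ t → A * (t - s) ≤ x t := fun t hst => by
    have := mul_sub_le_sub_of_le_hasDerivAt hx hst (c := A) fun u hu => by
      nlinarith [h_nonneg u hu.1, hy₀ u]
    linarith
  set L := y (s + 1) / A ^ 2 + 1
  have hL : A ^ 2 * L = y (s + 1) + A ^ 2 := by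
    simp only [L]
    field_simp
  have h_drop := sub_le_of_le_sq hB hy (a := s + 1) (b := s + 1 + L) (δ := A ^ 2)
    (by have := div_nonneg (hy₀ (s + 1)) (sq_nonneg A); linarith) fun t ht => by
      have : A * 1 ≤ A * (t - s) := mul_le_mul_of_nonneg_left (by linarith [ht.1]) hA.le
      have : A ≤ x t := by linarith [h_grow t (by linarith [ht.1])]
      nlinarith
  nlinarith [hy₀ (s + 1 + L)]

theorem neg_le_of_forall_nonneg (hA : 0 < A) (hB : 0 ≤ B)
    (hx : ∀ s, HasDerivAt x (x s * y s + A) s) (hy : ∀ s, HasDerivAt y (-(x s) ^ 2 - B) s)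
    (hy₀ : ∀ s, 0 ≤ y s) {s : ℝ} (hs : 0 ≤ s) : -(A + y 0 + 1) ≤ x s := by
  by_contra! hxs
  have h_le : ∀ t ∈ Icc s (s + 1), x t ≤ -(y 0 + 1) := fun t ht => by
    have := sub_le_mul_sub_of_hasDerivAt_le hx ht.1 (c := A) fun u _ => by
      nlinarith [neg_of_forall_nonneg hA hB hx hy hy₀ u, hy₀ u]
    nlinarith [ht.2]
  have h_drop := sub_le_of_le_sq hB hy (a := s) (b := s + 1) (δ := y 0 + 1) (by linarith)
    fun t ht => by nlinarith [h_le t ht, hy₀ 0]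
  linarith [antitone_of_hasDerivAt hB hy hs, hy₀ (s + 1)]

theorem exists_forall_ge_abs_le (hA : 0 < A) (hB : 0 ≤ B)
    (hx : ∀ s, HasDerivAt x (x s * y s + A) s) (hy : ∀ s, HasDerivAt y (-(x s) ^ 2 - B) s) :
    ∃ s₀ M, ∀ s, s₀ ≤ s → |x s| ≤ M := by
  by_cases h : ∃ s₁, y s₁ < 0
  · obtain ⟨s₁, hs₁⟩ := h
    exact ⟨s₁, exists_forall_ge_abs_le_of_neg hA hx (antitone_of_hasDerivAt hB hy) hs₁⟩
  · push Not at h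
    refine ⟨0, A + y 0 + 1, fun s hs => abs_le.2 ⟨neg_le_of_forall_nonneg hA hB hx hy h hs, ?_⟩⟩
    linarith [neg_of_forall_nonneg hA hB hx hy h s, h 0]

theorem hasDerivAt_neg_comp_neg_of_hasDerivAt_mul_add (hx : ∀ s, HasDerivAt x (x s * y s + A) s)
    (s : ℝ) : HasDerivAt (fun t => -x (-t)) (-x (-s) * -y (-s) + A) s := by
  have h : HasDerivAt (fun t => x (-t)) ((x (-s) * y (-s) + A) * -1) s :=
    (hx (-s)).comp s (hasDerivAt_neg s)
  exact h.fun_neg.congr_deriv (by ring)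

theorem hasDerivAt_neg_comp_neg_of_hasDerivAt_neg_sq_sub
    (hy : ∀ s, HasDerivAt y (-(x s) ^ 2 - B) s) (s : ℝ) :
    HasDerivAt (fun t => -y (-t)) (-(-x (-s)) ^ 2 - B) s := by
  have h : HasDerivAt (fun t => y (-t)) ((-x (-s) ^ 2 - B) * -1) s :=
    (hy (-s)).comp s (hasDerivAt_neg s)
  exact h.fun_neg.congr_deriv (by ring)

end System

/-- If `A > 0`, `B ≥ 0` and `(x, y)` solves `x' = xy + A`, `y' = -x² - B`
on `ℝ`, then `x` is bounded. -/
theorem stmt_5 (A B : ℝ) (hA : 0 < A) (hB : 0 ≤ B) (x y : ℝ → ℝ)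
    (hx : ∀ s, HasDerivAt x (x s * y s + A) s)
    (hy : ∀ s, HasDerivAt y (-(x s) ^ 2 - B) s) :
    ∃ M : ℝ, ∀ s, |x s| ≤ M := by
  obtain ⟨s₀, M₀, hM₀⟩ := exists_forall_ge_abs_le hA hB hx hy
  obtain ⟨s₁, M₁, hM₁⟩ := exists_forall_ge_abs_le hA hB
    (hasDerivAt_neg_comp_neg_of_hasDerivAt_mul_add hx)
    (hasDerivAt_neg_comp_neg_of_hasDerivAt_neg_sq_sub hy)
  obtain ⟨M, hM⟩ := (isCompact_Icc (a := -s₁) (b := s₀)).exists_bound_of_continuousOn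
    fun s _ => (hx s).continuousAt.continuousWithinAt
  refine ⟨max M (max M₀ M₁), fun s => ?_⟩
  rcases le_or_gt s₀ s with h₀ | h₀
  · exact (hM₀ s h₀).trans (le_max_of_le_right (le_max_left _ _))
  rcases le_or_gt s (-s₁) with h₁ | h₁
  · have := hM₁ (-s) (by linarith)
    rw [neg_neg, abs_neg] at this
    exact this.trans (le_max_of_le_right (le_max_right _ _))
  · exact (hM s ⟨h₁.le, h₀.le⟩).trans (le_max_left _ _)
end

section
/- Let A > 0 and B ≥ 0, and let (x, y) solve x'(s) = x(s)y(s) + A, y'(s) = -x(s)^2 - B on ℝ. Then x(s)² + y(s)² → ∞ as s → ±∞, and the function τ(s) = (A·x(s) - B·y(s))/(A² + B²) has exactly one zero; consequently the radius r = √(x² + y²)/√(A² + B²) has exactly one extremum, a global minimum. -/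
/-!
Put `u = x² + y²` and `C = A² + B²`. Then `u' = 2Cτ` and `τ' = 1 + (B/C) u + τ y`.
With `Y' = y`, the integrating factor gives `(τ e^{-Y})' = (1 + (B/C) u) e^{-Y} > 0`, so `τ`
vanishes at most once, changing sign from `-` to `+` there; `u`, hence `r`, decreases and then
increases. On a half-line where `u ≤ m²` we have `|y| ≤ m`, so `τ' ≥ 1 - m|τ|` and
`τ ± (m / 2C) u` grows at least linearly. Hence `τ` cannot stay `≤ 0` forever (nor, reversing
time, `≥ 0` in the past), which yields the zero, and where `τ ≥ 0` the bound `u ≤ m²` would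
force `τ ≥ 1`, so `u` is unbounded.
-/

open Filter Set

lemma mul_sub_le_sub_of_hasDerivAt {f f' : ℝ → ℝ} (hf : ∀ s, HasDerivAt f (f' s) s) {c a b : ℝ}
    (hab : a ≤ b) (hc : ∀ s, a ≤ s → c ≤ f' s) : c * (b - a) ≤ f b - f a :=
  (convex_Ici a).mul_sub_le_image_sub_of_le_deriv
    (fun s _ => (hf s).continuousAt.continuousWithinAt)
    (fun s _ => (hf s).differentiableAt.differentiableWithinAt)
    (fun s hs => by rw [(hf s).deriv]; exact hc s (interior_subset hs))
    a (mem_Ici.2 le_rfl) b (mem_Ici.2 hab) hab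

/-- The system satisfied by `u = x² + y²`, `τ` and `y`, with `κ = 2(A² + B²)` and
`β = B / (A² + B²)`; unlike the original system it is invariant under time reversal. -/
structure RadialSystem (κ β : ℝ) (u τ y : ℝ → ℝ) : Prop where
  κ_pos : 0 < κ
  β_nonneg : 0 ≤ β
  hasDerivAt_u : ∀ s, HasDerivAt u (κ * τ s) s
  hasDerivAt_τ : ∀ s, HasDerivAt τ (1 + β * u s + τ s * y s) s
  sq_le : ∀ s, y s ^ 2 ≤ u s
  continuous_y : Continuous y

namespace RadialSystem

variable {κ β : ℝ} {u τ y : ℝ → ℝ}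

lemma u_nonneg (h : RadialSystem κ β u τ y) (s : ℝ) : 0 ≤ u s :=
  (sq_nonneg _).trans (h.sq_le s)

lemma continuous_u (h : RadialSystem κ β u τ y) : Continuous u :=
  continuous_iff_continuousAt.2 fun s => (h.hasDerivAt_u s).continuousAt

lemma continuous_τ (h : RadialSystem κ β u τ y) : Continuous τ :=
  continuous_iff_continuousAt.2 fun s => (h.hasDerivAt_τ s).continuousAt

lemma comp_neg (h : RadialSystem κ β u τ y) :
    RadialSystem κ β (fun s => u (-s)) (fun s => -τ (-s)) (fun s => -y (-s)) where
  κ_pos := h.κ_pos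
  β_nonneg := h.β_nonneg
  hasDerivAt_u s :=
    ((h.hasDerivAt_u (-s)).comp s (hasDerivAt_neg s)).congr_deriv (by ring)
  hasDerivAt_τ s :=
    ((h.hasDerivAt_τ (-s)).comp s (hasDerivAt_neg s)).neg.congr_deriv (by ring)
  sq_le s := by simpa using h.sq_le (-s)
  continuous_y := (h.continuous_y.comp continuous_neg).neg

/-- Integrating factor: with `Y' = y`, `(τ e^{-Y})' = (1 + β u) e^{-Y} > 0`. -/
lemma exists_pos_strictMono_mul (h : RadialSystem κ β u τ y) :
    ∃ g : ℝ → ℝ, (∀ s, 0 < g s) ∧ StrictMono fun s => τ s * g s := by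
  set Y := fun s => ∫ t in (0 : ℝ)..s, y t
  have hY : ∀ s, HasDerivAt Y (y s) s := fun s =>
    (h.continuous_y.integral_hasStrictDerivAt 0 s).hasDerivAt
  refine ⟨fun s => Real.exp (-Y s), fun s => Real.exp_pos _, strictMono_of_deriv_pos fun s => ?_⟩
  have hd : HasDerivAt (fun s => τ s * Real.exp (-Y s))
      ((1 + β * u s + τ s * y s) * Real.exp (-Y s) + τ s * (Real.exp (-Y s) * -y s)) s :=
    (h.hasDerivAt_τ s).mul (hY s).neg.exp
  rw [hd.deriv]
  have : 0 < (1 + β * u s) * Real.exp (-Y s) :=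
    mul_pos (by nlinarith [h.β_nonneg, h.u_nonneg s]) (Real.exp_pos _)
  linarith

lemma neg_of_lt_of_eq_zero (h : RadialSystem κ β u τ y) {s₀ s : ℝ} (hs₀ : τ s₀ = 0)
    (hs : s < s₀) : τ s < 0 := by
  obtain ⟨g, hg, hmono⟩ := h.exists_pos_strictMono_mul
  have := hmono hs
  simp only [hs₀, zero_mul] at this
  exact neg_of_mul_neg_left this (hg s).le

lemma pos_of_gt_of_eq_zero (h : RadialSystem κ β u τ y) {s₀ s : ℝ} (hs₀ : τ s₀ = 0)
    (hs : s₀ < s) : 0 < τ s := by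
  obtain ⟨g, hg, hmono⟩ := h.exists_pos_strictMono_mul
  have := hmono hs
  simp only [hs₀, zero_mul] at this
  exact pos_of_mul_pos_left this (hg s).le

lemma eq_of_eq_zero (h : RadialSystem κ β u τ y) {s₀ s : ℝ} (hs₀ : τ s₀ = 0) (hs : τ s = 0) :
    s = s₀ := by
  rcases lt_trichotomy s s₀ with hlt | heq | hgt
  · exact absurd hs (h.neg_of_lt_of_eq_zero hs₀ hlt).ne
  · exact heq
  · exact absurd hs (h.pos_of_gt_of_eq_zero hs₀ hgt).ne'

/-- Where `τ ≤ 0`, `u` decreases, so `y ≤ m := √(u a)`, and then `τ - (m / κ) u` grows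
at least like `s`, although it stays below `-(m / κ) u ≤ 0`. -/
lemma exists_pos (h : RadialSystem κ β u τ y) (a : ℝ) : ∃ t, a ≤ t ∧ 0 < τ t := by
  by_contra! hτ
  set c := Real.sqrt (u a) / κ
  have hc : 0 ≤ c := div_nonneg (Real.sqrt_nonneg _) h.κ_pos.le
  have hu : ∀ t, a ≤ t → u t ≤ u a := fun t ht => by
    have := mul_sub_le_sub_of_hasDerivAt (f := fun s => -u s) (c := 0)
      (fun s => (h.hasDerivAt_u s).neg) ht
      fun s hs => neg_nonneg.2 (mul_nonpos_of_nonneg_of_nonpos h.κ_pos.le (hτ s hs))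
    linarith
  have hy : ∀ t, a ≤ t → y t ≤ c * κ := fun t ht => by
    rw [div_mul_cancel₀ _ h.κ_pos.ne']
    exact Real.le_sqrt_of_sq_le ((h.sq_le t).trans (hu t ht))
  set t := a + 1 + c * u a - τ a
  have hat : a ≤ t := by nlinarith [hτ a le_rfl, h.u_nonneg a]
  have hgrowth := mul_sub_le_sub_of_hasDerivAt (f := fun s => τ s - c * u s) (c := 1)
    (fun s => (h.hasDerivAt_τ s).sub ((h.hasDerivAt_u s).const_mul c)) hat fun s hs => by
      nlinarith [hτ s hs, hy s hs, h.β_nonneg, h.u_nonneg s]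
  nlinarith [hτ t hat, h.u_nonneg t]

lemma monotoneOn_u (h : RadialSystem κ β u τ y) {a : ℝ} (hτ : ∀ t, a ≤ t → 0 ≤ τ t) :
    MonotoneOn u (Ici a) := fun s hs t _ hst => by
  have := mul_sub_le_sub_of_hasDerivAt (c := 0) h.hasDerivAt_u hst
    fun r hr => mul_nonneg h.κ_pos.le (hτ r (le_trans hs hr))
  linarith

/-- If `τ ≥ 0` and `u < K` on `[a, ∞)`, then `|y| < √K` there and `τ + (√K / κ) u` grows at
least like `s`, so `τ ≥ 1` eventually and `u` grows linearly past `K`. -/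
lemma tendsto_atTop (h : RadialSystem κ β u τ y) {a : ℝ} (hτ : ∀ t, a ≤ t → 0 ≤ τ t) :
    Tendsto u atTop atTop := by
  suffices hunb : ∀ K, ∃ t, a ≤ t ∧ K ≤ u t from
    tendsto_atTop_atTop.2 fun K => (hunb K).imp fun t ⟨hat, ht⟩ s hs =>
      ht.trans (h.monotoneOn_u hτ hat (le_trans hat hs) hs)
  by_contra! hK
  obtain ⟨K, hK⟩ := hK
  set c := Real.sqrt K / κ
  have hc : 0 ≤ c := div_nonneg (Real.sqrt_nonneg _) h.κ_pos.le
  have hy : ∀ t, a ≤ t → -(c * κ) ≤ y t := fun t ht => by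
    rw [div_mul_cancel₀ _ h.κ_pos.ne']
    exact neg_le_of_abs_le (Real.abs_le_sqrt ((h.sq_le t).trans (hK t ht).le))
  set T := a + 1 + c * K
  have haT : a ≤ T := by nlinarith [h.u_nonneg a, hK a le_rfl]
  have hτT : ∀ t, T ≤ t → 1 ≤ τ t := fun t ht => by
    have := mul_sub_le_sub_of_hasDerivAt (f := fun s => τ s + c * u s) (c := 1)
      (fun s => (h.hasDerivAt_τ s).add ((h.hasDerivAt_u s).const_mul c)) (haT.trans ht)
      fun s hs => by nlinarith [hτ s hs, hy s hs, h.β_nonneg, h.u_nonneg s]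
    nlinarith [hτ a le_rfl, mul_nonneg hc (h.u_nonneg a),
      mul_le_mul_of_nonneg_left (hK t (haT.trans ht)).le hc]
  have hTt : T ≤ T + K / κ :=
    le_add_of_nonneg_right (div_nonneg (h.u_nonneg a |>.trans (hK a le_rfl).le) h.κ_pos.le)
  have := mul_sub_le_sub_of_hasDerivAt (c := κ) h.hasDerivAt_u hTt
    fun s hs => le_mul_of_one_le_right h.κ_pos.le (hτT s hs)
  rw [add_sub_cancel_left, mul_div_cancel₀ _ h.κ_pos.ne'] at this
  linarith [hK _ (haT.trans hTt), h.u_nonneg T]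

lemma tendsto_atBot (h : RadialSystem κ β u τ y) {a : ℝ} (hτ : ∀ t, t ≤ a → τ t ≤ 0) :
    Tendsto u atBot atTop :=
  tendsto_comp_neg_atTop_iff.1 <| h.comp_neg.tendsto_atTop (a := -a) fun t ht =>
    neg_nonneg.2 (hτ (-t) (neg_le.1 ht))

lemma exists_zero (h : RadialSystem κ β u τ y) : ∃ s₀, τ s₀ = 0 := by
  obtain ⟨t₁, -, hpos⟩ := h.exists_pos 0
  obtain ⟨t₂, -, hneg⟩ := h.comp_neg.exists_pos 0
  exact intermediate_value_univ (-t₂) t₁ h.continuous_τ ⟨(neg_pos.1 hneg).le, hpos.le⟩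

lemma strictAntiOn_Iic (h : RadialSystem κ β u τ y) {s₀ : ℝ} (hs₀ : τ s₀ = 0) :
    StrictAntiOn u (Iic s₀) :=
  strictAntiOn_of_deriv_neg (convex_Iic s₀) h.continuous_u.continuousOn fun s hs => by
    rw [interior_Iic] at hs
    rw [(h.hasDerivAt_u s).deriv]
    exact mul_neg_of_pos_of_neg h.κ_pos (h.neg_of_lt_of_eq_zero hs₀ hs)

lemma strictMonoOn_Ici (h : RadialSystem κ β u τ y) {s₀ : ℝ} (hs₀ : τ s₀ = 0) :
    StrictMonoOn u (Ici s₀) :=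
  strictMonoOn_of_deriv_pos (convex_Ici s₀) h.continuous_u.continuousOn fun s hs => by
    rw [interior_Ici] at hs
    rw [(h.hasDerivAt_u s).deriv]
    exact mul_pos h.κ_pos (h.pos_of_gt_of_eq_zero hs₀ hs)

end RadialSystem

lemma radialSystem_of_hasDerivAt {A B : ℝ} (hC : 0 < A ^ 2 + B ^ 2) (hB : 0 ≤ B) {x y : ℝ → ℝ}
    (hx : ∀ s, HasDerivAt x (x s * y s + A) s) (hy : ∀ s, HasDerivAt y (-(x s) ^ 2 - B) s) :
    RadialSystem (2 * (A ^ 2 + B ^ 2)) (B / (A ^ 2 + B ^ 2)) (fun s => x s ^ 2 + y s ^ 2)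
      (fun s => (A * x s - B * y s) / (A ^ 2 + B ^ 2)) y where
  κ_pos := by positivity
  β_nonneg := div_nonneg hB hC.le
  hasDerivAt_u s := (((hx s).pow 2).add ((hy s).pow 2)).congr_deriv (by field_simp; ring)
  hasDerivAt_τ s :=
    (((hx s).const_mul A).sub ((hy s).const_mul B)).div_const _ |>.congr_deriv
      (by field_simp; ring)
  sq_le s := le_add_of_nonneg_left (sq_nonneg _)
  continuous_y := continuous_iff_continuousAt.2 fun s => (hy s).continuousAt

lemma strictMonoOn_sqrt_div {c : ℝ} (hc : 0 < c) : StrictMonoOn (fun v => √v / c) (Ici 0) :=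
  fun _ hv _ _ hvw => div_lt_div_of_pos_right (Real.sqrt_lt_sqrt hv hvw) hc

/-- If `A > 0`, `B ≥ 0` and `(x, y)` solves `x' = xy + A`, `y' = -x² - B`
on `ℝ`, then `x² + y² → ∞` as `s → ±∞`, the function `τ = (Ax - By)/(A² + B²)` has
exactly one zero, and the radius `r = √(x² + y²)/√(A² + B²)` has exactly one extremum,
a global minimum: it is strictly decreasing before that point and strictly increasing
after it. -/
theorem stmt_7 (A B : ℝ) (hA : 0 < A) (hB : 0 ≤ B) (x y : ℝ → ℝ)
    (hx : ∀ s, HasDerivAt x (x s * y s + A) s)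
    (hy : ∀ s, HasDerivAt y (-(x s) ^ 2 - B) s)
    (τ r : ℝ → ℝ)
    (hτ : ∀ s, τ s = (A * x s - B * y s) / (A ^ 2 + B ^ 2))
    (hr : ∀ s, r s = Real.sqrt ((x s) ^ 2 + (y s) ^ 2) / Real.sqrt (A ^ 2 + B ^ 2)) :
    Tendsto (fun s => (x s) ^ 2 + (y s) ^ 2) atTop atTop ∧
    Tendsto (fun s => (x s) ^ 2 + (y s) ^ 2) atBot atTop ∧
    (∃! s₀, τ s₀ = 0) ∧
    (∃ s₀, τ s₀ = 0 ∧ StrictAntiOn r (Set.Iic s₀) ∧ StrictMonoOn r (Set.Ici s₀) ∧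
      ∀ s, r s₀ ≤ r s) := by
  have hC : 0 < A ^ 2 + B ^ 2 := by positivity
  have h := radialSystem_of_hasDerivAt hC hB hx hy
  obtain rfl : τ = _ := funext hτ
  obtain rfl : r = _ := funext hr
  obtain ⟨s₀, hs₀⟩ := h.exists_zero
  have hsqrt := strictMonoOn_sqrt_div (Real.sqrt_pos.2 hC)
  have hu : ∀ S, MapsTo (fun s => x s ^ 2 + y s ^ 2) S (Ici 0) := fun _ s _ => h.u_nonneg s
  have hanti := hsqrt.comp_strictAntiOn (h.strictAntiOn_Iic hs₀) (hu _)
  have hmono := hsqrt.comp (h.strictMonoOn_Ici hs₀) (hu _)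
  refine ⟨h.tendsto_atTop (a := s₀ + 1) fun t ht => (h.pos_of_gt_of_eq_zero hs₀ (by linarith)).le,
    h.tendsto_atBot (a := s₀ - 1) fun t ht => (h.neg_of_lt_of_eq_zero hs₀ (by linarith)).le,
    ⟨s₀, hs₀, fun s hs => h.eq_of_eq_zero hs₀ hs⟩, s₀, hs₀, hanti, hmono, fun s => ?_⟩
  rcases le_total s s₀ with hs | hs
  · exact hanti.antitoneOn hs (mem_Iic.2 le_rfl) hs
  · exact hmono.monotoneOn (mem_Ici.2 le_rfl) hs hs
end

section
/- Let A > 0 and B ≥ 0, and let (x, y) solve x'(s) = x(s)y(s) + A, y'(s) = -x(s)^2 - B on ℝ. Then x attains a negative global minimum and a positive global maximum, and x has no other local extrema. -/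
/-!
The time reversal `(x, y, s) ↦ (-x, -y, -s)` maps solutions to solutions and swaps maxima and
minima of `x`, so it suffices to treat the positive side. Since `y' ≤ 0`, `y` is antitone; at a
critical point `x y = -A ≠ 0`, and there `x'' = -x (x² + B)`, so positive critical points are
strict local maxima and, `y` having sign opposite to `x` there, come after all negative ones.
Between two positive critical points `x` would have an interior minimum, which is neither, so
there is at most one. Finally `x` cannot stay above a positive level on a half-line `[p, ∞)`
(`y` then decreases linearly, which drives `x` down) nor below a negative one (`y` becomes
negative and then `x' ≥ A`); together with the time reversal this traps a positive value of `x`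
between smaller values on both sides, producing a positive local maximum, which is then the
global one by uniqueness.
-/

open Set Filter Topology

theorem exists_ge_of_forall_le_deriv {f f' : ℝ → ℝ} (hf : ∀ s, HasDerivAt f (f' s) s)
    {a K : ℝ} (hK : 0 < K) (h : ∀ s ≥ a, K ≤ f' s) (M : ℝ) : ∃ b ≥ a, M ≤ f b := by
  have hmvt := (convex_Ici a).mul_sub_le_image_sub_of_le_deriv
    (fun s _ => (hf s).continuousAt.continuousWithinAt)
    (fun s _ => (hf s).differentiableAt.differentiableWithinAt)
    (fun s hs => (hf s).deriv ▸ h s (interior_subset hs))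
  have hb : a ≤ a + |M - f a| / K := le_add_of_nonneg_right (by positivity)
  refine ⟨_, hb, ?_⟩
  have := hmvt a self_mem_Ici _ hb hb
  rw [add_sub_cancel_left, mul_div_cancel₀ _ hK.ne'] at this
  linarith [le_abs_self (M - f a)]

theorem exists_le_of_forall_deriv_le {f f' : ℝ → ℝ} (hf : ∀ s, HasDerivAt f (f' s) s)
    {a K : ℝ} (hK : 0 < K) (h : ∀ s ≥ a, f' s ≤ -K) (M : ℝ) : ∃ b ≥ a, f b ≤ M := by
  obtain ⟨b, hab, hb⟩ := exists_ge_of_forall_le_deriv (fun s => (hf s).neg) hK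
    (fun s hs => le_neg.mpr (h s hs)) (-M)
  exact ⟨b, hab, neg_le_neg_iff.mp hb⟩

theorem exists_ge_of_forall_mul_le_deriv {f f' : ℝ → ℝ} (hf : ∀ s, HasDerivAt f (f' s) s)
    {a c : ℝ} (hc : 0 < c) (ha : 0 < f a) (h : ∀ s ≥ a, c * f s ≤ f' s) (M : ℝ) :
    ∃ b ≥ a, M ≤ f b := by
  have hg : ∀ s, HasDerivAt (fun t => f t * Real.exp (-c * t))
      ((f' s - c * f s) * Real.exp (-c * s)) s := fun s =>
    ((hf s).mul ((hasDerivAt_id s).const_mul (-c)).exp).congr_deriv (by simp only [id]; ring)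
  have hmono : MonotoneOn (fun t => f t * Real.exp (-c * t)) (Ici a) :=
    monotoneOn_of_deriv_nonneg (convex_Ici a)
      (fun s _ => (hg s).continuousAt.continuousWithinAt)
      (fun s _ => (hg s).differentiableAt.differentiableWithinAt)
      (fun s hs => (hg s).deriv ▸ mul_nonneg (sub_nonneg.2 (h s (interior_subset hs)))
        (Real.exp_pos _).le)
  have hge : ∀ s ≥ a, f a ≤ f s := fun s hs => by
    have hexp : Real.exp (-c * s) ≤ Real.exp (-c * a) := Real.exp_le_exp.2 (by nlinarith)
    refine le_of_mul_le_mul_right ?_ (Real.exp_pos (-c * s))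
    calc f a * Real.exp (-c * s) ≤ f a * Real.exp (-c * a) :=
          mul_le_mul_of_nonneg_left hexp ha.le
      _ ≤ f s * Real.exp (-c * s) := hmono self_mem_Ici hs hs
  exact exists_ge_of_forall_le_deriv hf (mul_pos hc ha)
    (fun s hs => (mul_le_mul_of_nonneg_left (hge s hs) hc.le).trans (h s hs)) M

theorem eventually_nhdsGT_lt_of_deriv_neg {f f' : ℝ → ℝ} (hf : ∀ s, HasDerivAt f (f' s) s)
    {m : ℝ} (h : ∀ᶠ s in 𝓝[>] m, f' s < 0) : ∀ᶠ s in 𝓝[>] m, f s < f m := by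
  obtain ⟨u, hmu, hu⟩ := mem_nhdsGT_iff_exists_Ioo_subset.mp h
  filter_upwards [Ioo_mem_nhdsGT hmu] with s hs
  have hanti : StrictAntiOn f (Icc m s) :=
    strictAntiOn_of_deriv_neg (convex_Icc m s) (fun t _ => (hf t).continuousAt.continuousWithinAt)
      fun t ht => by
        rw [interior_Icc] at ht
        exact (hf t).deriv ▸ hu ⟨ht.1, ht.2.trans hs.2⟩
  exact hanti (left_mem_Icc.2 hs.1.le) (right_mem_Icc.2 hs.1.le) hs.1

theorem eventually_nhdsLT_lt_of_deriv_pos {f f' : ℝ → ℝ} (hf : ∀ s, HasDerivAt f (f' s) s)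
    {m : ℝ} (h : ∀ᶠ s in 𝓝[<] m, 0 < f' s) : ∀ᶠ s in 𝓝[<] m, f s < f m := by
  obtain ⟨l, hlm, hl⟩ := mem_nhdsLT_iff_exists_Ioo_subset.mp h
  filter_upwards [Ioo_mem_nhdsLT hlm] with s hs
  have hmono : StrictMonoOn f (Icc s m) :=
    strictMonoOn_of_deriv_pos (convex_Icc s m) (fun t _ => (hf t).continuousAt.continuousWithinAt)
      fun t ht => by
        rw [interior_Icc] at ht
        exact (hf t).deriv ▸ hl ⟨hs.1.trans ht.1, ht.2⟩
  exact hmono (left_mem_Icc.2 hs.2.le) (right_mem_Icc.2 hs.2.le) hs.2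

theorem eventually_nhdsNE_lt_of_deriv_deriv_neg {f f' : ℝ → ℝ} {m D : ℝ}
    (hf : ∀ s, HasDerivAt f (f' s) s) (hf' : HasDerivAt f' D m) (hm : f' m = 0) (hD : D < 0) :
    ∀ᶠ s in 𝓝[≠] m, f s < f m := by
  have hslope : ∀ᶠ s in 𝓝[≠] m, f' s / (s - m) < 0 := by
    simpa only [slope_def_field, hm, sub_zero] using
      (hasDerivAt_iff_tendsto_slope.mp hf').eventually (gt_mem_nhds hD)
  rw [← nhdsLT_sup_nhdsGT, eventually_sup]
  refine ⟨eventually_nhdsLT_lt_of_deriv_pos hf ?_, eventually_nhdsGT_lt_of_deriv_neg hf ?_⟩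
  · filter_upwards [nhdsLT_le_nhdsNE m hslope, self_mem_nhdsWithin] with s hs (hsm : s < m)
    exact (div_neg_iff.mp hs).resolve_right (fun h => by linarith [h.2]) |>.1
  · filter_upwards [nhdsGT_le_nhdsNE m hslope, self_mem_nhdsWithin] with s hs (hsm : m < s)
    exact (div_neg_iff.mp hs).resolve_left (fun h => by linarith [h.2]) |>.1

theorem exists_isLocalMax_ge {f : ℝ → ℝ} (hf : Continuous f) {a p b : ℝ} (hap : a ≤ p)
    (hpb : p ≤ b) (ha : f a < f p) (hb : f b < f p) : ∃ c, IsLocalMax f c ∧ f p ≤ f c := by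
  obtain ⟨c, hc, hmax⟩ :=
    isCompact_Icc.exists_isMaxOn (nonempty_Icc.2 (hap.trans hpb)) hf.continuousOn
  have hpc : f p ≤ f c := hmax ⟨hap, hpb⟩
  have hcI : c ∈ Ioo a b :=
    ⟨hc.1.lt_of_ne (by rintro rfl; linarith), hc.2.lt_of_ne (by rintro rfl; linarith)⟩
  exact ⟨c, hmax.isLocalMax (Icc_mem_nhds hcI.1 hcI.2), hpc⟩

theorem exists_mem_Ioo_isLocalMin_of_eventually_lt {f : ℝ → ℝ} (hf : Continuous f) {a b : ℝ}
    (hab : a < b) (ha : ∀ᶠ s in 𝓝[>] a, f s < f a) (hb : ∀ᶠ s in 𝓝[<] b, f s < f b) :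
    ∃ c ∈ Ioo a b, IsLocalMin f c := by
  obtain ⟨c, hc, hmin⟩ := isCompact_Icc.exists_isMinOn (nonempty_Icc.2 hab.le) hf.continuousOn
  obtain ⟨s, hsa, hs⟩ := (ha.and (Ioo_mem_nhdsGT hab)).exists
  obtain ⟨t, htb, ht⟩ := (hb.and (Ioo_mem_nhdsLT hab)).exists
  have hcs : f c ≤ f s := hmin (Ioo_subset_Icc_self hs)
  have hct : f c ≤ f t := hmin (Ioo_subset_Icc_self ht)
  have hcI : c ∈ Ioo a b :=
    ⟨hc.1.lt_of_ne (by rintro rfl; linarith), hc.2.lt_of_ne (by rintro rfl; linarith)⟩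
  exact ⟨c, hcI, hmin.isLocalMin (Icc_mem_nhds hcI.1 hcI.2)⟩

namespace CurvatureODE

structure IsSolution (A B : ℝ) (x y : ℝ → ℝ) : Prop where
  hasDerivAt_x : ∀ s, HasDerivAt x (x s * y s + A) s
  hasDerivAt_y : ∀ s, HasDerivAt y (-(x s) ^ 2 - B) s

namespace IsSolution

variable {A B : ℝ} {x y : ℝ → ℝ}

theorem continuous_x (h : IsSolution A B x y) : Continuous x :=
  Differentiable.continuous fun s => (h.hasDerivAt_x s).differentiableAt

theorem antitone_y (h : IsSolution A B x y) (hB : 0 ≤ B) : Antitone y :=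
  antitone_of_deriv_nonpos (fun s => (h.hasDerivAt_y s).differentiableAt) fun s => by
    rw [(h.hasDerivAt_y s).deriv]
    nlinarith [sq_nonneg (x s)]

theorem reflect (h : IsSolution A B x y) :
    IsSolution A B (fun t => -x (-t)) (fun t => -y (-t)) where
  hasDerivAt_x s :=
    ((h.hasDerivAt_x (-s)).comp s (hasDerivAt_neg s)).neg.congr_deriv (by ring)
  hasDerivAt_y s :=
    ((h.hasDerivAt_y (-s)).comp s (hasDerivAt_neg s)).neg.congr_deriv (by ring)

theorem eventually_lt_of_crit (h : IsSolution A B x y) (hB : 0 ≤ B) {c : ℝ}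
    (hc : x c * y c + A = 0) (hxc : 0 < x c) : ∀ᶠ s in 𝓝[≠] c, x s < x c := by
  have hx' : HasDerivAt (fun s => x s * y s + A) (x c * (-(x c) ^ 2 - B)) c := by
    refine (((h.hasDerivAt_x c).mul (h.hasDerivAt_y c)).add_const A).congr_deriv ?_
    rw [hc]
    ring
  exact eventually_nhdsNE_lt_of_deriv_deriv_neg h.hasDerivAt_x hx' hc
    (mul_neg_of_pos_of_neg hxc (by nlinarith))

theorem lt_of_crit_of_crit (h : IsSolution A B x y) (hA : 0 < A) (hB : 0 ≤ B) {a c : ℝ}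
    (ha : x a * y a + A = 0) (hxa : x a < 0) (hc : x c * y c + A = 0) (hxc : 0 < x c) :
    a < c := by
  have hya : 0 < y a := by nlinarith
  have hyc : y c < 0 := by nlinarith
  by_contra! hca
  linarith [h.antitone_y hB hca]

theorem eq_of_crit_of_crit (h : IsSolution A B x y) (hA : 0 < A) (hB : 0 ≤ B) {a b : ℝ}
    (ha : x a * y a + A = 0) (hxa : 0 < x a) (hb : x b * y b + A = 0) (hxb : 0 < x b) :
    a = b := by
  wlog hab : a < b generalizing a b
  · rcases (not_lt.1 hab).eq_or_lt with hba | hba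
    · exact hba.symm
    · exact (this hb hxb ha hxa hba).symm
  obtain ⟨c, hc, hmin⟩ := exists_mem_Ioo_isLocalMin_of_eventually_lt h.continuous_x hab
    (nhdsGT_le_nhdsNE a (h.eventually_lt_of_crit hB ha hxa))
    (nhdsLT_le_nhdsNE b (h.eventually_lt_of_crit hB hb hxb))
  have hcc : x c * y c + A = 0 := hmin.hasDerivAt_eq_zero (h.hasDerivAt_x c)
  exfalso
  rcases (left_ne_zero_of_mul (by intro h0; linarith : x c * y c ≠ 0)).lt_or_gt with hneg | hpos
  · exact hc.1.not_gt (h.lt_of_crit_of_crit hA hB hcc hneg ha hxa)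
  · obtain ⟨s, hlt, hle⟩ :=
      ((h.eventually_lt_of_crit hB hcc hpos).and (hmin.filter_mono nhdsWithin_le_nhds)).exists
    exact hlt.not_ge hle

theorem exists_pos_of_y_nonpos (h : IsSolution A B x y) (hA : 0 < A) (hB : 0 ≤ B) {t : ℝ}
    (ht : y t ≤ 0) : ∃ s ≥ t, 0 < x s := by
  by_contra! hx
  have hx' : ∀ s ≥ t, A ≤ x s * y s + A := fun s hs => by
    have : y s ≤ 0 := (h.antitone_y hB hs).trans ht
    nlinarith [hx s hs]
  obtain ⟨s, hs, hxs⟩ := exists_ge_of_forall_le_deriv h.hasDerivAt_x hA hx' 1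
  linarith [hx s hs]

theorem frequently_atTop_neg_lt (h : IsSolution A B x y) (hA : 0 < A) (hB : 0 ≤ B) {c : ℝ}
    (hc : 0 < c) : ∃ᶠ s in atTop, -c < x s := frequently_atTop.2 fun p => by
  by_contra! hx
  obtain ⟨t, ht, hyt⟩ := exists_le_of_forall_deriv_le h.hasDerivAt_y (pow_pos hc 2)
    (fun s hs => by nlinarith [hx s hs]) 0
  obtain ⟨s, hs, hxs⟩ := h.exists_pos_of_y_nonpos hA hB hyt
  linarith [hx s (ht.trans hs)]

theorem frequently_atTop_lt (h : IsSolution A B x y) (hA : 0 < A) (hB : 0 ≤ B) {c : ℝ} (hc : 0 < c) :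
    ∃ᶠ s in atTop, x s < c := frequently_atTop.2 fun p => by
  by_contra! hx
  obtain ⟨t, ht, hyt⟩ := exists_le_of_forall_deriv_le h.hasDerivAt_y (pow_pos hc 2)
    (fun s hs => by nlinarith [hx s hs]) (-(A + 1) / c)
  have hcyt : c * y t ≤ -(A + 1) := by rwa [le_div_iff₀ hc, mul_comm] at hyt
  have hyt0 : y t < 0 := by nlinarith
  have hx' : ∀ s ≥ t, x s * y s + A ≤ -1 := fun s hs => by
    have hys : y s ≤ y t := h.antitone_y hB hs
    nlinarith [hx s (ht.trans hs)]
  obtain ⟨s, hs, hxs⟩ := exists_le_of_forall_deriv_le h.hasDerivAt_x one_pos hx' 0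
  linarith [hx s (ht.trans hs)]

theorem exists_pos (h : IsSolution A B x y) (hA : 0 < A) (hB : 0 ≤ B) : ∃ p, 0 < x p := by
  by_contra! hx
  by_cases hy : ∃ t, y t ≤ 0
  · obtain ⟨t, ht⟩ := hy
    obtain ⟨s, -, hs⟩ := h.exists_pos_of_y_nonpos hA hB ht
    linarith [hx s]
  push Not at hy
  set c := y 0
  -- `x' ≥ c x + A` on `[0, ∞)`, so `x + A / c` grows exponentially as soon as it is positive
  have hbound : ∀ s ≥ 0, x s ≤ -(A / c) := by
    intro s₀ hs₀
    by_contra! hs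
    have hx' : ∀ s ≥ s₀, c * (x s + A / c) ≤ x s * y s + A := fun s hs => by
      have : y s ≤ c := h.antitone_y hB (hs₀.trans hs)
      rw [mul_add, mul_div_cancel₀ _ (hy 0).ne']
      nlinarith [hx s]
    obtain ⟨s, -, hs'⟩ := exists_ge_of_forall_mul_le_deriv
      (fun s => (h.hasDerivAt_x s).add_const (A / c)) (hy 0) (by linarith : 0 < x s₀ + A / c)
      hx' (A / c + 1)
    linarith [hx s]
  obtain ⟨s, hs, hxs⟩ := frequently_atTop.1 (h.frequently_atTop_neg_lt hA hB (div_pos hA (hy 0))) 0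
  linarith [hbound s hs]

theorem exists_lt_lt_of_pos (h : IsSolution A B x y) (hA : 0 < A) (hB : 0 ≤ B) {p : ℝ}
    (hp : 0 < x p) : ∃ o ≤ p, ∃ q ≥ p, x o < x p ∧ x q < x p := by
  obtain ⟨q, hq, hxq⟩ := frequently_atTop.1 (h.frequently_atTop_lt hA hB hp) p
  obtain ⟨t, ht, hxt⟩ := frequently_atTop.1 (h.reflect.frequently_atTop_neg_lt hA hB hp) (-p)
  exact ⟨-t, by linarith, q, hq, by linarith, hxq⟩

theorem exists_forall_le_pos (h : IsSolution A B x y) (hA : 0 < A) (hB : 0 ≤ B) :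
    ∃ m, 0 < x m ∧ ∀ s, x s ≤ x m := by
  have hloc : ∀ p, 0 < x p → ∃ c, IsLocalMax x c ∧ x p ≤ x c := fun p hp => by
    obtain ⟨o, ho, q, hq, hxo, hxq⟩ := h.exists_lt_lt_of_pos hA hB hp
    exact exists_isLocalMax_ge h.continuous_x ho hq hxo hxq
  obtain ⟨p, hp⟩ := h.exists_pos hA hB
  obtain ⟨m, hm, hpm⟩ := hloc p hp
  have hxm : 0 < x m := hp.trans_le hpm
  refine ⟨m, hxm, fun t => ?_⟩
  by_contra! hmt
  obtain ⟨c, hc, htc⟩ := hloc t (hxm.trans hmt)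
  have hcm : c = m := h.eq_of_crit_of_crit hA hB (hc.hasDerivAt_eq_zero (h.hasDerivAt_x c))
    (by linarith) (hm.hasDerivAt_eq_zero (h.hasDerivAt_x m)) hxm
  rw [hcm] at htc
  linarith

end IsSolution

end CurvatureODE

open CurvatureODE in
/-- If `A > 0`, `B ≥ 0` and `(x, y)` solves `x' = xy + A`, `y' = -x² - B`
on `ℝ`, then `x` attains a negative global minimum and a positive global maximum,
and has no other local extrema. -/
theorem stmt_8 (A B : ℝ) (hA : 0 < A) (hB : 0 ≤ B) (x y : ℝ → ℝ)
    (hx : ∀ s, HasDerivAt x (x s * y s + A) s)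
    (hy : ∀ s, HasDerivAt y (-(x s) ^ 2 - B) s) :
    ∃ s₁ s₂ : ℝ, x s₁ < 0 ∧ 0 < x s₂ ∧
      (∀ s, x s₁ ≤ x s) ∧ (∀ s, x s ≤ x s₂) ∧
      (∀ s, IsLocalExtr x s → s = s₁ ∨ s = s₂) := by
  have h : IsSolution A B x y := ⟨hx, hy⟩
  obtain ⟨s₂, hpos₂, hmax₂⟩ := h.exists_forall_le_pos hA hB
  obtain ⟨t₁, hpos₁, hmax₁⟩ := h.reflect.exists_forall_le_pos hA hB
  refine ⟨-t₁, s₂, by linarith, hpos₂, fun s => by simpa using hmax₁ (-s), hmax₂, fun s hs => ?_⟩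
  have hcrit : x s * y s + A = 0 := hs.hasDerivAt_eq_zero (hx s)
  rcases (left_ne_zero_of_mul (by intro h0; linarith : x s * y s ≠ 0)).lt_or_gt with hneg | hpos
  · left
    have hcrit₁ := ((isMaxOn_univ_iff.2 hmax₁).isLocalMax univ_mem).hasDerivAt_eq_zero
      (h.reflect.hasDerivAt_x t₁)
    have := h.reflect.eq_of_crit_of_crit hA hB (a := -s) (by simpa using hcrit)
      (by simpa using hneg) hcrit₁ hpos₁
    linarith
  · right
    exact h.eq_of_crit_of_crit hA hB hcrit hpos
      (((isMaxOn_univ_iff.2 hmax₂).isLocalMax univ_mem).hasDerivAt_eq_zero (hx s₂)) hpos₂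
end

section
/- Let A > 0 and B ≥ 0, and let (x, y) solve x'(s) = x(s)y(s) + A, y'(s) = -x(s)^2 - B on ℝ. Then x(s) → 0 as s → +∞ and as s → -∞. -/
/-!
Since `y' = -x² - B ≤ 0`, `y` decreases. Suppose it stayed above some `M`. Then `|y| ≤ C` on
`[0, ∞)`, and in the band `|x| ≤ ε := A / (2C)` the drift dominates: `x' ≥ A / 2`. Since `y` is
bounded below, `x` cannot stay outside the band (`y' ≤ -ε²` there), so it enters the band, can
never leave it downwards, crosses it in finite time and then stays above `ε`. This again gives
`y' ≤ -ε²`, a contradiction; hence `y → -∞`.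
Once `y ≤ 0`, the line `x = 0` is crossed upwards at speed at least `A` and never recrossed, so
eventually `x ≥ 0`. Once `y ≤ -2A/δ`, the line `x = δ` is crossed downwards at speed at least
`A` and never recrossed, so eventually `x ≤ δ`.
The limit at `-∞` follows from the symmetry `(s, x, y) ↦ (-s, -x, -y)` of the system.
-/

open Filter Set Topology

section Barriers

variable {f f' : ℝ → ℝ}

theorem tendsto_atTop_of_eventually_le_deriv (hf : ∀ t, HasDerivAt f (f' t) t) {m : ℝ}
    (hm : 0 < m) (h : ∀ᶠ t in atTop, m ≤ f' t) : Tendsto f atTop atTop := by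
  obtain ⟨s₀, hs₀⟩ := eventually_atTop.1 h
  have hlinear : ∀ t ≥ s₀, f s₀ + m * (t - s₀) ≤ f t := by
    intro t ht
    have := (convex_Ici s₀).mul_sub_le_image_sub_of_le_deriv
      (fun u _ => (hf u).continuousAt.continuousWithinAt)
      (fun u _ => (hf u).differentiableAt.differentiableWithinAt)
      (fun u hu => (hf u).deriv ▸ hs₀ u (by rw [interior_Ici] at hu; exact le_of_lt hu))
      s₀ self_mem_Ici t ht ht
    linarith
  refine tendsto_atTop_mono' atTop (eventually_atTop.2 ⟨s₀, hlinear⟩) ?_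
  exact tendsto_atTop_add_const_left _ _
    ((tendsto_atTop_add_const_right _ _ tendsto_id).const_mul_atTop hm)

theorem le_of_deriv_pos_at_level (hf : ∀ t, HasDerivAt f (f' t) t) {a c : ℝ} (ha : c ≤ f a)
    (hc : ∀ t ≥ a, f t = c → 0 < f' t) : ∀ t ≥ a, c ≤ f t := fun _ ht =>
  image_le_of_deriv_right_lt_deriv_boundary (f := fun _ => c) (f' := fun _ => 0)
    continuousOn_const (fun _ _ => hasDerivWithinAt_const _ _ _) ha hf
    (fun u hu hu' => hc u hu.1 hu'.symm) ⟨ht, le_rfl⟩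

theorem eventually_ge_of_deriv_ge_below (hf : ∀ t, HasDerivAt f (f' t) t) {c m : ℝ}
    (hm : 0 < m) (h : ∀ᶠ t in atTop, f t ≤ c → m ≤ f' t) : ∀ᶠ t in atTop, c ≤ f t := by
  obtain ⟨s₀, hs₀⟩ := eventually_atTop.1 h
  by_cases hreach : ∃ a ≥ s₀, c ≤ f a
  · obtain ⟨a, has₀, ha⟩ := hreach
    exact eventually_atTop.2 ⟨a, le_of_deriv_pos_at_level hf ha fun t ht hft =>
      hm.trans_le (hs₀ t (has₀.trans ht) hft.le)⟩
  · push Not at hreach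
    have hf_top : Tendsto f atTop atTop := tendsto_atTop_of_eventually_le_deriv hf hm
      (eventually_atTop.2 ⟨s₀, fun t ht => hs₀ t ht (hreach t ht).le⟩)
    exact hf_top.eventually_ge_atTop c

theorem eventually_le_of_deriv_le_above (hf : ∀ t, HasDerivAt f (f' t) t) {c m : ℝ}
    (hm : 0 < m) (h : ∀ᶠ t in atTop, c ≤ f t → f' t ≤ -m) : ∀ᶠ t in atTop, f t ≤ c := by
  have hneg := eventually_ge_of_deriv_ge_below (fun t => (hf t).neg) hm (c := -c)
    (h.mono fun t ht hft => by rw [Pi.neg_apply] at hft; linarith [ht (by linarith)])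
  exact hneg.mono fun t ht => by rw [Pi.neg_apply] at ht; linarith

end Barriers

structure IsSolution (A B : ℝ) (x y : ℝ → ℝ) : Prop where
  hasDerivAt_x : ∀ s, HasDerivAt x (x s * y s + A) s
  hasDerivAt_y : ∀ s, HasDerivAt y (-(x s) ^ 2 - B) s

namespace IsSolution

variable {A B : ℝ} {x y : ℝ → ℝ}

theorem neg_comp_neg (h : IsSolution A B x y) :
    IsSolution A B (fun s => -x (-s)) (fun s => -y (-s)) where
  hasDerivAt_x s := by
    have hd : HasDerivAt (fun s => -x (-s)) (-((x (-s) * y (-s) + A) * -1)) s :=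
      ((h.hasDerivAt_x (-s)).comp s (hasDerivAt_neg s)).neg
    convert hd using 1
    ring
  hasDerivAt_y s := by
    have hd : HasDerivAt (fun s => -y (-s)) (-((-(x (-s)) ^ 2 - B) * -1)) s :=
      ((h.hasDerivAt_y (-s)).comp s (hasDerivAt_neg s)).neg
    convert hd using 1
    ring

theorem antitone_y (h : IsSolution A B x y) (hB : 0 ≤ B) : Antitone y :=
  antitone_of_deriv_nonpos (fun s => (h.hasDerivAt_y s).differentiableAt) fun s => by
    rw [(h.hasDerivAt_y s).deriv]
    nlinarith [sq_nonneg (x s)]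

theorem frequently_abs_x_lt (h : IsSolution A B x y) (hB : 0 ≤ B) {M : ℝ}
    (hM : ∀ s, M ≤ y s) {ε : ℝ} (hε : 0 < ε) : ∃ᶠ s in atTop, |x s| < ε := by
  by_contra hfreq
  rw [not_frequently] at hfreq
  have hdecay : ∀ᶠ s in atTop, ε ^ 2 ≤ -(-(x s) ^ 2 - B) := hfreq.mono fun s hs => by
    have := pow_le_pow_left₀ hε.le (not_lt.1 hs) 2
    rw [sq_abs] at this
    linarith
  have hy_bot : Tendsto (fun s => -y s) atTop atTop :=
    tendsto_atTop_of_eventually_le_deriv (fun s => (h.hasDerivAt_y s).neg) (by positivity) hdecay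
  obtain ⟨s, hs⟩ := (hy_bot.eventually_gt_atTop (-M)).exists
  linarith [hM s]

theorem tendsto_y_atBot (h : IsSolution A B x y) (hA : 0 < A) (hB : 0 ≤ B) :
    Tendsto y atTop atBot := by
  rw [tendsto_atTop_atBot_iff_of_antitone (h.antitone_y hB)]
  by_contra! ⟨M, hM⟩
  set C := |M| + |y 0| + 1
  have hC : 0 < C := by positivity
  have hyC : ∀ s ≥ 0, |y s| ≤ C := fun s hs => abs_le.2
    ⟨by linarith [hM s, neg_abs_le M, abs_nonneg (y 0)],
     by linarith [h.antitone_y hB hs, le_abs_self (y 0), abs_nonneg M]⟩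
  set ε := A / (2 * C)
  have hε : 0 < ε := by positivity
  have hband : ∀ s ≥ 0, |x s| ≤ ε → A / 2 ≤ x s * y s + A := by
    intro s hs hxs
    have hxy : |x s * y s| ≤ A / 2 := calc
      |x s * y s| = |x s| * |y s| := abs_mul _ _
      _ ≤ ε * C := mul_le_mul hxs (hyC s hs) (abs_nonneg _) hε.le
      _ = A / 2 := by simp only [ε]; field_simp
    linarith [neg_abs_le (x s * y s)]
  have hfreq := h.frequently_abs_x_lt hB (fun s => (hM s).le) hε
  obtain ⟨s₁, hxs₁, hs₁⟩ := (hfreq.and_eventually (eventually_ge_atTop 0)).exists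
  have hlower : ∀ s ≥ s₁, -ε ≤ x s :=
    le_of_deriv_pos_at_level h.hasDerivAt_x (abs_lt.1 hxs₁).1.le fun s hs hxs => by
      linarith [hband s (hs₁.trans hs) (by rw [hxs, abs_neg, abs_of_pos hε])]
  have hupper : ∀ᶠ s in atTop, ε ≤ x s :=
    eventually_ge_of_deriv_ge_below h.hasDerivAt_x (half_pos hA) <|
      (eventually_ge_atTop s₁).mono fun s hs hxs =>
        hband s (hs₁.trans hs) (abs_le.2 ⟨hlower s hs, hxs⟩)
  obtain ⟨s, hxs, hs⟩ := (hfreq.and_eventually hupper).exists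
  linarith [le_abs_self (x s)]

theorem eventually_nonneg_x (h : IsSolution A B x y) (hA : 0 < A) (hB : 0 ≤ B) :
    ∀ᶠ s in atTop, 0 ≤ x s :=
  eventually_ge_of_deriv_ge_below h.hasDerivAt_x hA <|
    ((h.tendsto_y_atBot hA hB).eventually_le_atBot 0).mono fun s hy hx => by
      linarith [mul_nonneg_of_nonpos_of_nonpos hx hy]

theorem eventually_x_le (h : IsSolution A B x y) (hA : 0 < A) (hB : 0 ≤ B) {δ : ℝ}
    (hδ : 0 < δ) : ∀ᶠ s in atTop, x s ≤ δ :=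
  eventually_le_of_deriv_le_above h.hasDerivAt_x hA <|
    ((h.tendsto_y_atBot hA hB).eventually_le_atBot (-(2 * A / δ))).mono fun s hy hx => by
      have hy_nonpos : y s ≤ 0 := hy.trans (by simp only [neg_nonpos]; positivity)
      have hxy : x s * y s ≤ -(2 * A) := calc
        x s * y s ≤ δ * y s := mul_le_mul_of_nonpos_right hx hy_nonpos
        _ ≤ δ * -(2 * A / δ) := mul_le_mul_of_nonneg_left hy hδ.le
        _ = -(2 * A) := by field_simp
      linarith

theorem tendsto_x_atTop (h : IsSolution A B x y) (hA : 0 < A) (hB : 0 ≤ B) :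
    Tendsto x atTop (𝓝 0) :=
  tendsto_order.2
    ⟨fun _ ha => (h.eventually_nonneg_x hA hB).mono fun _ hs => ha.trans_le hs,
     fun _ hb => (h.eventually_x_le hA hB (half_pos hb)).mono fun _ hs =>
       hs.trans_lt (half_lt_self hb)⟩

end IsSolution

/-- If `A > 0`, `B ≥ 0` and `(x, y)` solves `x' = xy + A`, `y' = -x² - B`
on `ℝ`, then `x(s) → 0` as `s → ±∞`. -/
theorem stmt_9 (A B : ℝ) (hA : 0 < A) (hB : 0 ≤ B) (x y : ℝ → ℝ)
    (hx : ∀ s, HasDerivAt x (x s * y s + A) s)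
    (hy : ∀ s, HasDerivAt y (-(x s) ^ 2 - B) s) :
    Tendsto x atTop (nhds 0) ∧ Tendsto x atBot (nhds 0) := by
  have h : IsSolution A B x y := ⟨hx, hy⟩
  refine ⟨h.tendsto_x_atTop hA hB, ?_⟩
  have hreflected := ((h.neg_comp_neg.tendsto_x_atTop hA hB).comp tendsto_neg_atBot_atTop).neg
  simpa [Function.comp_def] using hreflected
end

section
/- Let A > 0 and B ≥ 0, and let (x, y) solve x'(s) = x(s)y(s) + A, y'(s) = -x(s)^2 - B on ℝ. Set τ = (Ax - By)/(A² + B²), ν = (Bx + Ay)/(A² + B²) and r = √(τ² + ν²). Then τ/ν → -B/A as s → ±∞, τ/r → ±B/√(A² + B²) as s → ±∞, and ν/r → ∓A/√(A² + B²) as s → ±∞. -/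
/-!
The system is invariant under `(x, y)(s) ↦ (-x(-s), -y(-s))`, so it suffices to study
`s → +∞`. Since `y' = -x² - B ≤ 0`, `y` is antitone. If `y` stayed bounded, then
`x' = xy + A ≥ A/2` whenever `|x|` is small, so `x` cannot linger near `0` and is eventually
bounded away from it; then `y' ≤ -δ²` drives `y` to `-∞` after all. Once `y → -∞`, the interval
`[-ε, ε]` is eventually attracting for `x`, since `xy + A` has the sign of `-x` outside it;
hence `x → 0`. Thus the direction of `(x, y)` tends to `(0, -1)`, and `(τ, ν)` is the image of
`(x, y)` under a fixed similarity, which yields the limits of `τ/r`, `ν/r` and of `τ/ν`.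
-/

open Filter Set Topology

section Fencing

variable {f f' : ℝ → ℝ}

theorem tendsto_atBot_of_hasDerivAt_le_neg (hf : ∀ t, HasDerivAt f (f' t) t) {c : ℝ}
    (hc : 0 < c) (h : ∀ᶠ t in atTop, f' t ≤ -c) : Tendsto f atTop atBot := by
  obtain ⟨T, hT⟩ := eventually_atTop.1 h
  have hlin : ∀ s ≥ T, f s ≤ f T + -(c * (s - T)) := fun s hs => by
    have := (convex_Ici T).image_sub_le_mul_sub_of_deriv_le
      (fun t _ => (hf t).continuousAt.continuousWithinAt)
      (fun t _ => (hf t).differentiableAt.differentiableWithinAt)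
      (fun t ht => by rw [interior_Ici] at ht; rw [(hf t).deriv]; exact hT t ht.le)
      T self_mem_Ici s hs hs
    linarith
  have hshift : Tendsto (fun s => s - T) atTop atTop :=
    tendsto_atTop_add_const_right _ _ tendsto_id
  exact tendsto_atBot_mono' atTop (eventually_atTop.2 ⟨T, hlin⟩) <|
    tendsto_atBot_add_const_left _ _ (tendsto_neg_atTop_atBot.comp (hshift.const_mul_atTop hc))

theorem le_of_hasDerivAt_neg_on_level (hf : ∀ t, HasDerivAt f (f' t) t) {a T : ℝ}
    (hT : f T ≤ a) (h : ∀ t ≥ T, f t = a → f' t < 0) : ∀ s ≥ T, f s ≤ a := fun _ hs =>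
  image_le_of_deriv_right_lt_deriv_boundary (B := fun _ => a) (B' := 0)
    (fun t _ => (hf t).continuousAt.continuousWithinAt) (fun t _ => (hf t).hasDerivWithinAt)
    hT (fun _ => hasDerivAt_const _ _) (fun t ht => h t ht.1) ⟨hs, le_rfl⟩

theorem eventually_le_of_hasDerivAt_le_neg (hf : ∀ t, HasDerivAt f (f' t) t) {a c : ℝ}
    (hc : 0 < c) (h : ∀ᶠ t in atTop, a ≤ f t → f' t ≤ -c) : ∀ᶠ t in atTop, f t ≤ a := by
  obtain ⟨T, hT⟩ := eventually_atTop.1 h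
  by_cases hbelow : ∃ T' ≥ T, f T' ≤ a
  · obtain ⟨T', hT'T, hT'⟩ := hbelow
    refine eventually_atTop.2 ⟨T', le_of_hasDerivAt_neg_on_level hf hT' fun t ht hft => ?_⟩
    linarith [hT t (hT'T.trans ht) hft.ge]
  · push Not at hbelow
    have hderiv : ∀ᶠ t in atTop, f' t ≤ -c :=
      eventually_atTop.2 ⟨T, fun t ht => hT t ht (hbelow t ht).le⟩
    exact (tendsto_atBot_of_hasDerivAt_le_neg hf hc hderiv).eventually_le_atBot a

theorem eventually_ge_of_hasDerivAt_ge_pos (hf : ∀ t, HasDerivAt f (f' t) t) {a c : ℝ}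
    (hc : 0 < c) (h : ∀ᶠ t in atTop, f t ≤ a → c ≤ f' t) : ∀ᶠ t in atTop, a ≤ f t := by
  have := eventually_le_of_hasDerivAt_le_neg (fun t => (hf t).neg) hc
    (h.mono fun t ht hft => neg_le_neg (ht (neg_le_neg_iff.1 hft)))
  exact this.mono fun t ht => neg_le_neg_iff.1 ht

theorem eventually_le_abs_of_hasDerivAt_ge_pos (hf : ∀ t, HasDerivAt f (f' t) t) {δ c : ℝ}
    (hc : 0 < c) (h : ∀ᶠ t in atTop, |f t| ≤ δ → c ≤ f' t) : ∀ᶠ t in atTop, δ ≤ |f t| := by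
  rcases lt_or_ge δ 0 with hδ | hδ
  · exact Eventually.of_forall fun t => hδ.le.trans (abs_nonneg _)
  obtain ⟨T, hT⟩ := eventually_atTop.1 h
  by_cases hentry : ∃ T' ≥ T, -δ ≤ f T'
  · obtain ⟨T', hT'T, hT'⟩ := hentry
    have hlow : ∀ t ≥ T', -δ ≤ f t := by
      have := le_of_hasDerivAt_neg_on_level (f := fun t => -f t) (fun t => (hf t).neg)
        (neg_le.1 hT') fun t ht hft => by
          have := hT t (hT'T.trans ht) (by rw [abs_le]; constructor <;> linarith)
          linarith
      exact fun t ht => neg_le.1 (this t ht)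
    have := eventually_ge_of_hasDerivAt_ge_pos hf hc <|
      eventually_atTop.2 ⟨T', fun t ht hft => hT t (hT'T.trans ht) (abs_le.2 ⟨hlow t ht, hft⟩)⟩
    exact this.mono fun t ht => ht.trans (le_abs_self _)
  · push Not at hentry
    exact eventually_atTop.2 ⟨T, fun t ht => (lt_neg.1 (hentry t ht)).le.trans (neg_le_abs _)⟩

end Fencing

theorem tendsto_div_sqrt_sq_add_sq {α : Type*} {l : Filter α} {u v : α → ℝ}
    (hu : Tendsto u l (𝓝 0)) (hv : Tendsto v l atBot) :
    Tendsto (fun s => u s / Real.sqrt (u s ^ 2 + v s ^ 2)) l (𝓝 0) ∧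
    Tendsto (fun s => v s / Real.sqrt (u s ^ 2 + v s ^ 2)) l (𝓝 (-1)) := by
  have hq : Tendsto (fun s => u s / v s) l (𝓝 0) := hu.div_atBot hv
  have hw : Tendsto (fun s => Real.sqrt ((u s / v s) ^ 2 + 1)) l (𝓝 1) := by
    simpa using ((hq.pow 2).add_const 1).sqrt
  have hnorm : ∀ᶠ s in l,
      Real.sqrt (u s ^ 2 + v s ^ 2) = -v s * Real.sqrt ((u s / v s) ^ 2 + 1) := by
    filter_upwards [hv.eventually_lt_atBot 0] with s hs
    rw [← Real.sqrt_sq (neg_nonneg.2 hs.le), ← Real.sqrt_mul (sq_nonneg _)]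
    have := hs.ne
    congr 1
    field_simp
  constructor
  · have := hq.neg.div hw one_ne_zero
    rw [neg_zero, zero_div] at this
    refine this.congr' (hnorm.mono fun s hs => ?_)
    simp only [Pi.div_apply]
    rw [hs]
    ring
  · have := (tendsto_const_nhds (x := (-1 : ℝ))).div hw one_ne_zero
    rw [div_one] at this
    refine this.congr' ?_
    filter_upwards [hnorm, hv.eventually_ne_atBot 0] with s hs hv0
    simp only [Pi.div_apply]
    rw [hs]
    field_simp

namespace SelfSimilarODE

variable {A B : ℝ} {x y : ℝ → ℝ}

theorem y_tendsto_atBot (hA : 0 < A) (hB : 0 ≤ B) (hx : ∀ s, HasDerivAt x (x s * y s + A) s)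
    (hy : ∀ s, HasDerivAt y (-(x s) ^ 2 - B) s) : Tendsto y atTop atBot := by
  by_contra hnot
  have hanti : Antitone y := antitone_of_hasDerivAt_nonpos hy fun s => by
    simp only [Pi.zero_apply]; nlinarith [sq_nonneg (x s)]
  obtain ⟨M, hM0, hM⟩ : ∃ M > 0, ∀ s ≥ 0, |y s| ≤ M := by
    obtain ⟨b, hb⟩ : ∃ b, ∀ s, b < y s := by
      simpa [tendsto_atTop_atBot_iff_of_antitone hanti] using hnot
    refine ⟨|b| + |y 0| + 1, by positivity, fun s hs => abs_le.2 ⟨?_, ?_⟩⟩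
    · linarith [hb s, neg_abs_le b, abs_nonneg (y 0)]
    · linarith [hanti hs, le_abs_self (y 0), abs_nonneg b]
  obtain ⟨δ, hδ, hδM⟩ : ∃ δ > 0, δ * M = A / 2 := ⟨A / (2 * M), by positivity, by field_simp⟩
  have hrise : ∀ᶠ s in atTop, |x s| ≤ δ → A / 2 ≤ x s * y s + A :=
    eventually_atTop.2 ⟨0, fun s hs hxs => by
      have : |x s * y s| ≤ δ * M := by
        rw [abs_mul]; exact mul_le_mul hxs (hM s hs) (abs_nonneg _) hδ.le
      linarith [neg_abs_le (x s * y s)]⟩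
  have hfar := eventually_le_abs_of_hasDerivAt_ge_pos hx (half_pos hA) hrise
  refine hnot (tendsto_atBot_of_hasDerivAt_le_neg hy (pow_pos hδ 2) (hfar.mono fun s hs => ?_))
  nlinarith [sq_abs (x s)]

theorem x_tendsto_zero (hA : 0 < A) (hx : ∀ s, HasDerivAt x (x s * y s + A) s)
    (hy : Tendsto y atTop atBot) : Tendsto x atTop (𝓝 0) := by
  refine Metric.nhds_basis_closedBall.tendsto_right_iff.2 fun ε hε => ?_
  have hεy : ∀ᶠ s in atTop, ε * y s ≤ -(2 * A) := by
    filter_upwards [hy.eventually_le_atBot (-(2 * A / ε))] with s hs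
    have := mul_le_mul_of_nonneg_left hs hε.le
    rwa [mul_neg, mul_div_cancel₀ _ hε.ne'] at this
  have hupper : ∀ᶠ s in atTop, x s ≤ ε := by
    refine eventually_le_of_hasDerivAt_le_neg hx hA (hεy.mono fun s hs hxs => ?_)
    nlinarith
  have hlower : ∀ᶠ s in atTop, -ε ≤ x s := by
    refine eventually_ge_of_hasDerivAt_ge_pos hx hA (hεy.mono fun s hs hxs => ?_)
    nlinarith
  filter_upwards [hupper, hlower] with s h1 h2
  rw [Metric.mem_closedBall, Real.dist_eq, sub_zero, abs_le]
  exact ⟨h2, h1⟩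

theorem hasDerivAt_reflect (hx : ∀ s, HasDerivAt x (x s * y s + A) s)
    (hy : ∀ s, HasDerivAt y (-(x s) ^ 2 - B) s) :
    (∀ s, HasDerivAt (fun t => -x (-t)) (-x (-s) * -y (-s) + A) s) ∧
    (∀ s, HasDerivAt (fun t => -y (-t)) (-(-x (-s)) ^ 2 - B) s) :=
  ⟨fun s => ((hx (-s)).comp s (hasDerivAt_neg s)).neg.congr_deriv (by ring),
    fun s => ((hy (-s)).comp s (hasDerivAt_neg s)).neg.congr_deriv (by ring)⟩

theorem tendsto_neg_atBot (hA : 0 < A) (hB : 0 ≤ B) (hx : ∀ s, HasDerivAt x (x s * y s + A) s)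
    (hy : ∀ s, HasDerivAt y (-(x s) ^ 2 - B) s) :
    Tendsto (fun s => -x s) atBot (𝓝 0) ∧ Tendsto (fun s => -y s) atBot atBot := by
  obtain ⟨hX, hY⟩ := hasDerivAt_reflect hx hy
  have hYtop := y_tendsto_atBot hA hB hX hY
  have hXtop := x_tendsto_zero hA hX hYtop
  constructor
  · simpa [Function.comp_def] using hXtop.comp tendsto_neg_atBot_atTop
  · simpa [Function.comp_def] using hYtop.comp tendsto_neg_atBot_atTop

end SelfSimilarODE

theorem tendsto_ratios_of_tendsto_atBot {α : Type*} {l : Filter α} {A B : ℝ} (hA : 0 < A)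
    {x y τ ν r : α → ℝ}
    (hτ : ∀ s, τ s = (A * x s - B * y s) / (A ^ 2 + B ^ 2))
    (hν : ∀ s, ν s = (B * x s + A * y s) / (A ^ 2 + B ^ 2))
    (hr : ∀ s, r s = Real.sqrt ((τ s) ^ 2 + (ν s) ^ 2))
    (hx : Tendsto x l (𝓝 0)) (hy : Tendsto y l atBot) :
    Tendsto (fun s => τ s / ν s) l (𝓝 (-B / A)) ∧
    Tendsto (fun s => τ s / r s) l (𝓝 (B / Real.sqrt (A ^ 2 + B ^ 2))) ∧
    Tendsto (fun s => ν s / r s) l (𝓝 (-(A / Real.sqrt (A ^ 2 + B ^ 2)))) := by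
  set S := A ^ 2 + B ^ 2
  have hS0 : 0 < S := by positivity
  have hS : 0 < Real.sqrt S := Real.sqrt_pos.2 hS0
  have hr_eq : ∀ s, r s = Real.sqrt (x s ^ 2 + y s ^ 2) / Real.sqrt S := fun s => by
    rw [hr, hτ, hν, ← Real.sqrt_div' _ hS0.le]
    congr 1
    field_simp
    ring
  have hnorm_pos : ∀ᶠ s in l, 0 < Real.sqrt (x s ^ 2 + y s ^ 2) :=
    (hy.eventually_lt_atBot 0).mono fun s hs => Real.sqrt_pos.2 (by nlinarith)
  obtain ⟨hx_dir, hy_dir⟩ := tendsto_div_sqrt_sq_add_sq hx hy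
  have hτr : Tendsto (fun s => τ s / r s) l (𝓝 (B / Real.sqrt S)) := by
    have := ((hx_dir.const_mul A).sub (hy_dir.const_mul B)).div_const (Real.sqrt S)
    rw [mul_zero, mul_neg_one, zero_sub, neg_neg] at this
    refine this.congr' (hnorm_pos.mono fun s hs => ?_)
    dsimp only
    rw [hτ, hr_eq]
    field_simp
    rw [Real.sq_sqrt hS0.le]
  have hνr : Tendsto (fun s => ν s / r s) l (𝓝 (-(A / Real.sqrt S))) := by
    have := ((hx_dir.const_mul B).add (hy_dir.const_mul A)).div_const (Real.sqrt S)
    rw [mul_zero, mul_neg_one, zero_add, neg_div] at this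
    refine this.congr' (hnorm_pos.mono fun s hs => ?_)
    dsimp only
    rw [hν, hr_eq]
    field_simp
    rw [Real.sq_sqrt hS0.le]
  refine ⟨?_, hτr, hνr⟩
  have := hτr.div hνr (neg_ne_zero.2 (div_pos hA hS).ne')
  rw [div_neg, div_div_div_cancel_right₀ hS.ne', ← neg_div] at this
  refine this.congr' (hnorm_pos.mono fun s hs => ?_)
  dsimp only [Pi.div_apply]
  rw [div_div_div_cancel_right₀ (by rw [hr_eq]; positivity)]

/-- If `A > 0`, `B ≥ 0` and `(x, y)` solves `x' = xy + A`, `y' = -x² - B`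
on `ℝ`, and `τ = (Ax - By)/(A² + B²)`, `ν = (Bx + Ay)/(A² + B²)`, `r = √(τ² + ν²)`,
then `τ/ν → -B/A` as `s → ±∞`, `τ/r → ±B/√(A² + B²)` and `ν/r → ∓A/√(A² + B²)`
as `s → ±∞`. -/
theorem stmt_10 (A B : ℝ) (hA : 0 < A) (hB : 0 ≤ B) (x y : ℝ → ℝ)
    (hx : ∀ s, HasDerivAt x (x s * y s + A) s)
    (hy : ∀ s, HasDerivAt y (-(x s) ^ 2 - B) s)
    (τ ν r : ℝ → ℝ)
    (hτ : ∀ s, τ s = (A * x s - B * y s) / (A ^ 2 + B ^ 2))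
    (hν : ∀ s, ν s = (B * x s + A * y s) / (A ^ 2 + B ^ 2))
    (hr : ∀ s, r s = Real.sqrt ((τ s) ^ 2 + (ν s) ^ 2)) :
    Tendsto (fun s => τ s / ν s) atTop (nhds (-B / A)) ∧
    Tendsto (fun s => τ s / ν s) atBot (nhds (-B / A)) ∧
    Tendsto (fun s => τ s / r s) atTop (nhds (B / Real.sqrt (A ^ 2 + B ^ 2))) ∧
    Tendsto (fun s => τ s / r s) atBot (nhds (-(B / Real.sqrt (A ^ 2 + B ^ 2)))) ∧
    Tendsto (fun s => ν s / r s) atTop (nhds (-(A / Real.sqrt (A ^ 2 + B ^ 2)))) ∧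
    Tendsto (fun s => ν s / r s) atBot (nhds (A / Real.sqrt (A ^ 2 + B ^ 2))) := by
  have hyTop := SelfSimilarODE.y_tendsto_atBot hA hB hx hy
  have hxTop := SelfSimilarODE.x_tendsto_zero hA hx hyTop
  obtain ⟨hxBot, hyBot⟩ := SelfSimilarODE.tendsto_neg_atBot hA hB hx hy
  obtain ⟨hτνTop, hτrTop, hνrTop⟩ := tendsto_ratios_of_tendsto_atBot hA hτ hν hr hxTop hyTop
  obtain ⟨hτνBot, hτrBot, hνrBot⟩ :=
    tendsto_ratios_of_tendsto_atBot (B := B) (τ := fun s => -τ s) (ν := fun s => -ν s)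
      (r := r) hA (fun s => by rw [hτ]; ring) (fun s => by rw [hν]; ring)
      (fun s => by rw [hr, neg_sq, neg_sq]) hxBot hyBot
  refine ⟨hτνTop, ?_, hτrTop, ?_, hνrTop, ?_⟩
  · simpa only [neg_div_neg_eq] using hτνBot
  · simpa only [neg_div, neg_neg] using hτrBot.neg
  · simpa only [neg_div, neg_neg] using hνrBot.neg
end

section
/- Let A > 0 and B ≥ 0, and let (x, y) solve x'(s) = x(s)y(s) + A, y'(s) = -x(s)^2 - B on ℝ. Define θ(s) = ∫₀^s x(s') ds'. Then θ(s) → +∞ as s → +∞ and also θ(s) → +∞ as s → -∞; equivalently, ∫₀^∞ x ds = +∞ and ∫_{-∞}^0 x ds = -∞. -/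
/-!
The component `y` is nonincreasing, and it cannot stay positive: otherwise `0 < y ≤ y 0` on
`[0, ∞)`, so `x - k y` with `k = y 0 ^ 2 / (2 A)` grows at least linearly, which forces `x → ∞`
and then `y → -∞`. Once `y ≤ 0`, `x` becomes nonnegative (while `x < 0` we have `x' ≥ A`) and stays
so, hence `θ` is eventually nondecreasing. If it were bounded, `x` would be bounded and `y` would
decrease at most linearly, with some slope `D`. Choosing `b` with `θ S - θ b < ε` for all
`S ≥ b`, the estimate `x' = A + x y ≥ A + y S * x` on `[b, S]` gives
`x S ≥ x b + A (S - b) + y S (θ S - θ b)`, which grows linearly once `ε D ≤ A / 2`: a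
contradiction. The reflection `(x, y) ↦ (-x (-s), -y (-s))` preserves the system and turns the
limit at `-∞` into the one at `+∞`.
-/

open Filter Set

theorem mul_sub_le_image_sub_of_le_hasDerivAt {f f' : ℝ → ℝ} {a b c : ℝ}
    (hf : ∀ t, HasDerivAt f (f' t) t) (hc : ∀ t ∈ Icc a b, c ≤ f' t) (hab : a ≤ b) :
    c * (b - a) ≤ f b - f a :=
  (convex_Icc a b).mul_sub_le_image_sub_of_le_deriv
    (fun t _ => (hf t).continuousAt.continuousWithinAt)
    (fun t _ => (hf t).differentiableAt.differentiableWithinAt)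
    (fun t ht => (hf t).deriv ▸ hc t (interior_subset ht))
    a (left_mem_Icc.2 hab) b (right_mem_Icc.2 hab) hab

theorem tendsto_atTop_of_add_mul_sub_le {f : ℝ → ℝ} {a c d : ℝ} (hd : 0 < d)
    (hf : ∀ t ≥ a, c + d * (t - a) ≤ f t) : Tendsto f atTop atTop :=
  tendsto_atTop_mono' _ (eventually_atTop.2 ⟨a, hf⟩) <| tendsto_atTop_add_const_left _ _ <|
    (tendsto_atTop_add_const_right _ _ tendsto_id).const_mul_atTop hd

theorem tendsto_atTop_of_hasDerivAt_ge {f f' : ℝ → ℝ} {c : ℝ} (hc : 0 < c)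
    (hf : ∀ t, HasDerivAt f (f' t) t) (hf' : ∀ᶠ t in atTop, c ≤ f' t) :
    Tendsto f atTop atTop := by
  obtain ⟨a, ha⟩ := eventually_atTop.1 hf'
  refine tendsto_atTop_of_add_mul_sub_le (a := a) (c := f a) hc fun t ht => ?_
  linarith [mul_sub_le_image_sub_of_le_hasDerivAt hf (fun s hs => ha s hs.1) ht]

theorem exists_forall_lt_add_of_bddAbove {f : ℝ → ℝ} {a ε : ℝ} (hf : BddAbove (f '' Ici a))
    (hε : 0 < ε) : ∃ b ≥ a, ∀ s ≥ a, f s < f b + ε := by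
  obtain ⟨_, ⟨b, hb, rfl⟩, hlt⟩ :=
    exists_lt_of_lt_csSup (nonempty_Ici.image f) (sub_lt_self (sSup (f '' Ici a)) hε)
  exact ⟨b, hb, fun s hs => by linarith [le_csSup hf ⟨s, hs, rfl⟩]⟩

structure CurvatureODE (A B : ℝ) (x y : ℝ → ℝ) : Prop where
  hasDerivAt_x : ∀ s, HasDerivAt x (x s * y s + A) s
  hasDerivAt_y : ∀ s, HasDerivAt y (-(x s) ^ 2 - B) s

namespace CurvatureODE

variable {A B : ℝ} {x y : ℝ → ℝ}

theorem continuous_x (h : CurvatureODE A B x y) : Continuous x :=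
  continuous_iff_continuousAt.2 fun s => (h.hasDerivAt_x s).continuousAt

theorem antitone_y (h : CurvatureODE A B x y) (hB : 0 ≤ B) : Antitone y :=
  antitone_of_hasDerivAt_nonpos h.hasDerivAt_y fun s => by
    simp only [Pi.zero_apply]; nlinarith [sq_nonneg (x s)]

theorem comp_neg (h : CurvatureODE A B x y) :
    CurvatureODE A B (fun s => -x (-s)) (fun s => -y (-s)) where
  hasDerivAt_x s := ((h.hasDerivAt_x (-s)).comp s (hasDerivAt_neg s)).neg.congr_deriv (by ring)
  hasDerivAt_y s := ((h.hasDerivAt_y (-s)).comp s (hasDerivAt_neg s)).neg.congr_deriv (by ring)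

theorem nonneg_x_of_le (h : CurvatureODE A B x y) (hA : 0 < A) {a s : ℝ} (ha : 0 ≤ x a)
    (has : a ≤ s) : 0 ≤ x s :=
  image_le_of_deriv_right_lt_deriv_boundary' (f' := 0) continuousOn_const
    (fun _ _ => hasDerivWithinAt_const _ _ _) ha h.continuous_x.continuousOn
    (fun t _ => (h.hasDerivAt_x t).hasDerivWithinAt)
    (fun t _ hxt => by simpa [← hxt] using hA) ⟨has, le_rfl⟩

theorem exists_y_nonpos (h : CurvatureODE A B x y) (hA : 0 < A) (hB : 0 ≤ B) :
    ∃ a, y a ≤ 0 := by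
  by_contra! hy
  set k := y 0 ^ 2 / (2 * A)
  have hk : 2 * A * k = y 0 ^ 2 := by simp only [k]; field_simp
  have hk0 : 0 < k := by have := hy 0; positivity
  have hxky : Tendsto (fun s => x s - k * y s) atTop atTop := by
    refine tendsto_atTop_of_hasDerivAt_ge (half_pos hA)
      (fun s => (h.hasDerivAt_x s).sub ((h.hasDerivAt_y s).const_mul k)) ?_
    filter_upwards [eventually_ge_atTop 0] with s hs
    have hys : y s ≤ y 0 := h.antitone_y hB hs
    have hys0 := hy s
    -- `k x ^ 2 + x y + A / 2 ≥ 0`: its discriminant `y ^ 2 - y 0 ^ 2` is nonpositive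
    nlinarith [sq_nonneg (x s * y s + A), mul_le_mul hys hys hys0.le (hy 0).le,
      sq_nonneg (x s), mul_nonneg hk0.le hB, mul_nonneg (sq_nonneg (x s)) (sq_nonneg (y 0))]
  have hx : Tendsto x atTop atTop :=
    tendsto_atTop_mono (fun s => by nlinarith [hy s]) hxky
  have hny : Tendsto (fun s => -y s) atTop atTop := by
    refine tendsto_atTop_of_hasDerivAt_ge one_pos (fun s => (h.hasDerivAt_y s).neg) ?_
    filter_upwards [hx.eventually_ge_atTop 1] with s hs
    nlinarith
  obtain ⟨s, hs⟩ := (hny.eventually_gt_atTop 0).exists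
  linarith [hy s]

theorem eventually_x_nonneg_and_y_nonpos (h : CurvatureODE A B x y) (hA : 0 < A) (hB : 0 ≤ B) :
    ∀ᶠ s in atTop, 0 ≤ x s ∧ y s ≤ 0 := by
  obtain ⟨a, ha⟩ := h.exists_y_nonpos hA hB
  have hy : ∀ s ≥ a, y s ≤ 0 := fun s hs => (h.antitone_y hB hs).trans ha
  obtain ⟨b, hab, hb⟩ : ∃ b ≥ a, 0 ≤ x b := by
    by_contra! hneg
    have hx : Tendsto x atTop atTop := by
      refine tendsto_atTop_of_hasDerivAt_ge hA h.hasDerivAt_x ?_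
      filter_upwards [eventually_ge_atTop a] with s hs
      nlinarith [hneg s hs, hy s hs]
    obtain ⟨s, hs, hxs⟩ := ((eventually_ge_atTop a).and (hx.eventually_ge_atTop 0)).exists
    exact (hneg s hs).not_ge hxs
  filter_upwards [eventually_ge_atTop b] with s hs
  exact ⟨h.nonneg_x_of_le hA hb hs, hy s (hab.trans hs)⟩

theorem not_bddAbove_image_Ici_of_hasDerivAt (h : CurvatureODE A B x y) (hA : 0 < A) (hB : 0 ≤ B)
    {θ : ℝ → ℝ} (hθ : ∀ s, HasDerivAt θ (x s) s) {a : ℝ} (hx : ∀ s ≥ a, 0 ≤ x s)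
    (hy : ∀ s ≥ a, y s ≤ 0) : ¬BddAbove (θ '' Ici a) := by
  rintro ⟨M, hM⟩
  have hθM : ∀ s ≥ a, θ s ≤ M := fun s hs => hM ⟨s, hs, rfl⟩
  set K := x a ^ 2 + 2 * A * (M - θ a)
  -- `(2 A θ - x ^ 2)' = -2 x ^ 2 y ≥ 0`
  have hxK : ∀ s ≥ a, x s ^ 2 ≤ K := fun s hs => by
    have := mul_sub_le_image_sub_of_le_hasDerivAt (c := 0)
      (fun t => ((hθ t).const_mul (2 * A)).sub ((h.hasDerivAt_x t).pow 2))
      (fun t ht => by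
        simp only [Nat.cast_ofNat, Nat.add_one_sub_one, pow_one, sub_nonneg]
        nlinarith [hy t ht.1, sq_nonneg (x t)]) hs
    simp only [Pi.sub_apply, Pi.pow_apply] at this
    nlinarith [hθM s hs]
  set D := K + B
  have hD : 0 ≤ D := by nlinarith [hθM a le_rfl, sq_nonneg (x a)]
  have hyD : ∀ s ≥ a, ∀ t ≥ s, y s - D * (t - s) ≤ y t := fun s hs t hts => by
    have := mul_sub_le_image_sub_of_le_hasDerivAt (c := -D) h.hasDerivAt_y
      (fun u hu => by linarith [hxK u (hs.trans hu.1)]) hts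
    linarith
  set ε := A / (2 * D + 1)
  have hε : 0 < ε := by positivity
  have hεD : 2 * (ε * D) ≤ A := by
    have : ε * (2 * D + 1) = A := by simp only [ε]; field_simp
    nlinarith
  obtain ⟨b, hba, hb⟩ := exists_forall_lt_add_of_bddAbove ⟨M, hM⟩ hε
  have hxS : ∀ S ≥ b, x b + A * (S - b) + y S * (θ S - θ b) ≤ x S := fun S hS => by
    have := mul_sub_le_image_sub_of_le_hasDerivAt (c := A)
      (fun t => (h.hasDerivAt_x t).sub ((hθ t).const_mul (y S)))
      (fun t ht => by nlinarith [hx t (hba.trans ht.1), h.antitone_y hB ht.2]) hS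
    simp only [Pi.sub_apply] at this
    linarith
  have hxlin : ∀ S ≥ b, x b + ε * y b + A / 2 * (S - b) ≤ x S := fun S hS => by
    nlinarith [hxS S hS, hyD b hba S hS, hb S (hba.trans hS), hy S (hba.trans hS), hy b hba]
  obtain ⟨S, hSa, hS⟩ := ((eventually_ge_atTop a).and
    ((tendsto_atTop_of_add_mul_sub_le (half_pos hA) hxlin).eventually_gt_atTop (K + 1))).exists
  nlinarith [hxK S hSa, hθM a le_rfl, sq_nonneg (x a)]

theorem tendsto_atTop_of_hasDerivAt (h : CurvatureODE A B x y) (hA : 0 < A) (hB : 0 ≤ B)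
    {θ : ℝ → ℝ} (hθ : ∀ s, HasDerivAt θ (x s) s) : Tendsto θ atTop atTop := by
  obtain ⟨a, ha⟩ := eventually_atTop.1 (h.eventually_x_nonneg_and_y_nonpos hA hB)
  refine tendsto_atTop_atTop.2 fun M => ?_
  obtain ⟨_, ⟨b, hb, rfl⟩, hMb⟩ := not_bddAbove_iff.1 (h.not_bddAbove_image_Ici_of_hasDerivAt
    hA hB hθ (fun s hs => (ha s hs).1) fun s hs => (ha s hs).2) M
  refine ⟨b, fun s hs => ?_⟩
  have := mul_sub_le_image_sub_of_le_hasDerivAt (c := 0) hθ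
    (fun t ht => (ha t (hb.trans ht.1)).1) hs
  linarith

end CurvatureODE

/-- If `A > 0`, `B ≥ 0` and `(x, y)` solves `x' = xy + A`, `y' = -x² - B`
on `ℝ`, and `θ(s) = ∫₀^s x`, then `θ(s) → +∞` as `s → +∞` and `θ(s) → +∞` as
`s → -∞`; i.e. each arm has infinite total curvature. -/
theorem stmt_12 (A B : ℝ) (hA : 0 < A) (hB : 0 ≤ B) (x y : ℝ → ℝ)
    (hx : ∀ s, HasDerivAt x (x s * y s + A) s)
    (hy : ∀ s, HasDerivAt y (-(x s) ^ 2 - B) s)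
    (θ : ℝ → ℝ) (hθ : ∀ s, θ s = ∫ t in (0:ℝ)..s, x t) :
    Tendsto θ atTop atTop ∧ Tendsto θ atBot atTop := by
  have h : CurvatureODE A B x y := ⟨hx, hy⟩
  have hθx : ∀ s, HasDerivAt θ (x s) s := by
    rw [funext hθ]
    exact fun s => (h.continuous_x.integral_hasStrictDerivAt 0 s).hasDerivAt
  have hθx' : ∀ s, HasDerivAt (fun s => θ (-s)) (-x (-s)) s := fun s =>
    ((hθx (-s)).comp s (hasDerivAt_neg s)).congr_deriv (by ring)
  exact ⟨h.tendsto_atTop_of_hasDerivAt hA hB hθx,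
    by simpa [Function.comp_def] using
      (h.comp_neg.tendsto_atTop_of_hasDerivAt hA hB hθx').comp tendsto_neg_atBot_atTop⟩
end

section
/- Let A ≠ 0 and let (x, y) solve x'(s) = x(s)y(s) + A, y'(s) = -x(s)^2 on ℝ (i.e., the system with B = 0). Define θ(s) = ∫₀^s x(s') ds'. Then the function s ↦ x(s)² + y(s)² - 2A·θ(s) is constant. -/
/-! Along the system `x' = xy + A`, `y' = -x² - B` one has `(x² + y²)' = 2Ax - 2By`, the cross
terms `±2x²y` cancelling. For `B = 0` this is `2A θ'`, so `x² + y² - 2Aθ` has zero derivative. -/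

theorem hasDerivAt_sq_add_sq_of_ode {x y : ℝ → ℝ} {A B s : ℝ}
    (hx : HasDerivAt x (x s * y s + A) s) (hy : HasDerivAt y (-(x s) ^ 2 - B) s) :
    HasDerivAt (fun s => x s ^ 2 + y s ^ 2) (2 * A * x s - 2 * B * y s) s := by
  refine ((hx.fun_pow 2).fun_add (hy.fun_pow 2)).congr_deriv ?_
  push_cast
  ring

theorem hasDerivAt_of_eq_intervalIntegral {f θ : ℝ → ℝ} {a : ℝ} (hf : Continuous f)
    (hθ : ∀ s, θ s = ∫ t in a..s, f t) (s : ℝ) : HasDerivAt θ (f s) s := by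
  rw [funext hθ]
  exact (hf.integral_hasStrictDerivAt a s).hasDerivAt

theorem stmt_13_general (A : ℝ) (x y : ℝ → ℝ)
    (hx : ∀ s, HasDerivAt x (x s * y s + A) s)
    (hy : ∀ s, HasDerivAt y (-(x s) ^ 2) s)
    (θ : ℝ → ℝ) (hθ : ∀ s, θ s = ∫ t in (0:ℝ)..s, x t) :
    ∀ s t : ℝ, (x s) ^ 2 + (y s) ^ 2 - 2 * A * θ s =
      (x t) ^ 2 + (y t) ^ 2 - 2 * A * θ t := by
  have hx_cont : Continuous x := continuous_iff_continuousAt.2 fun s => (hx s).continuousAt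
  have hderiv : ∀ s, HasDerivAt (fun s => x s ^ 2 + y s ^ 2 - 2 * A * θ s) 0 s := fun s => by
    have hy₀ : HasDerivAt y (-(x s) ^ 2 - 0) s := by simpa using hy s
    refine ((hasDerivAt_sq_add_sq_of_ode (hx s) hy₀).fun_sub
      ((hasDerivAt_of_eq_intervalIntegral hx_cont hθ s).const_mul (2 * A))).congr_deriv ?_
    ring
  exact is_const_of_deriv_eq_zero (fun s => (hderiv s).differentiableAt) fun s => (hderiv s).deriv

/-- If `A ≠ 0` and `(x, y)` solves `x' = xy + A`, `y' = -x²` on `ℝ`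
(the system with `B = 0`), and `θ(s) = ∫₀^s x`, then `x² + y² - 2Aθ` is constant. -/
theorem stmt_13 (A : ℝ) (hA : A ≠ 0) (x y : ℝ → ℝ)
    (hx : ∀ s, HasDerivAt x (x s * y s + A) s)
    (hy : ∀ s, HasDerivAt y (-(x s) ^ 2) s)
    (θ : ℝ → ℝ) (hθ : ∀ s, θ s = ∫ t in (0:ℝ)..s, x t) :
    ∀ s t : ℝ, (x s) ^ 2 + (y s) ^ 2 - 2 * A * θ s =
      (x t) ^ 2 + (y t) ^ 2 - 2 * A * θ t :=
  stmt_13_general A x y hx hy θ hθ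
end

section
/- Let β > 0 and consider the system x'(s) = x(s)y(s) + 1, y'(s) = -x(s)^2 + β². There is no nonconstant periodic solution (x, y) : ℝ → ℝ² with x(s) > 0 for all s. -/
/-!
Along any solution in the right half-plane, `Ψ = β² log x - x²/2 - (y + 1/x)²/2` satisfies
`Ψ' = (y + 1/x)² / x ≥ 0`. A periodic solution makes the nondecreasing function `Ψ` periodic,
hence constant, so `y + 1/x ≡ 0`; then `x' = x (y + 1/x) = 0`, and the solution is the circle
`x ≡ c`, `y ≡ -1/c`.
-/

open Function

theorem Monotone.eq_of_periodic {α : Type*} [PartialOrder α] {f : ℝ → α} {L : ℝ}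
    (hf : Monotone f) (hL : 0 < L) (hper : Periodic f L) (a b : ℝ) : f a = f b := by
  wlog hab : a ≤ b generalizing a b
  · exact (this b a (le_of_not_ge hab)).symm
  obtain ⟨n, hn⟩ := exists_nat_ge ((b - a) / L)
  have hb : b ≤ a + n * L := by
    have := (div_le_iff₀ hL).mp hn
    linarith
  refine le_antisymm (hf hab) ?_
  calc f b ≤ f (a + n * L) := hf hb
    _ = f a := (hper.nat_mul n) a

noncomputable def lyapunov (β x y : ℝ) : ℝ :=
  β ^ 2 * Real.log x - x ^ 2 / 2 - (y + x⁻¹) ^ 2 / 2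

theorem hasDerivAt_lyapunov {β : ℝ} {x y : ℝ → ℝ} {s : ℝ}
    (hx : HasDerivAt x (x s * y s + 1) s) (hy : HasDerivAt y (-(x s) ^ 2 + β ^ 2) s)
    (hxs : x s ≠ 0) :
    HasDerivAt (fun t => lyapunov β (x t) (y t)) ((y s + (x s)⁻¹) ^ 2 / x s) s := by
  refine (show HasDerivAt (fun t => lyapunov β (x t) (y t)) _ s from
    (((hx.log hxs).const_mul (β ^ 2)).sub ((hx.pow 2).div_const 2)).sub
      (((hy.add (hx.inv hxs)).pow 2).div_const 2)).congr_deriv ?_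
  simp only [Pi.add_apply, Pi.inv_apply, Nat.cast_ofNat, Nat.add_one_sub_one, pow_one]
  field_simp
  ring

theorem eq_of_add_inv_eq_zero {x y : ℝ → ℝ} (hx : ∀ s, HasDerivAt x (x s * y s + 1) s)
    (hx0 : ∀ s, x s ≠ 0) (hxy : ∀ s, y s + (x s)⁻¹ = 0) (s t : ℝ) :
    x s = x t ∧ y s = y t := by
  have hx' : ∀ s, HasDerivAt x 0 s := fun s => by
    have h : x s * y s + 1 = x s * (y s + (x s)⁻¹) := by field_simp [hx0 s]
    simpa [h, hxy s] using hx s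
  have hxst : x s = x t :=
    is_const_of_deriv_eq_zero (fun u => (hx' u).differentiableAt) (fun u => (hx' u).deriv) s t
  refine ⟨hxst, ?_⟩
  rw [eq_neg_of_add_eq_zero_left (hxy s), eq_neg_of_add_eq_zero_left (hxy t), hxst]

theorem stmt_14_general (β : ℝ) (x y : ℝ → ℝ)
    (hx : ∀ s, HasDerivAt x (x s * y s + 1) s)
    (hy : ∀ s, HasDerivAt y (-(x s) ^ 2 + β ^ 2) s)
    (hpos : ∀ s, 0 < x s)
    (L : ℝ) (hL : 0 < L)
    (hper : ∀ s, x (s + L) = x s ∧ y (s + L) = y s) :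
    ∀ s t : ℝ, x s = x t ∧ y s = y t := by
  set Ψ : ℝ → ℝ := fun t => lyapunov β (x t) (y t)
  have hΨ : ∀ s, HasDerivAt Ψ ((y s + (x s)⁻¹) ^ 2 / x s) s := fun s =>
    hasDerivAt_lyapunov (hx s) (hy s) (hpos s).ne'
  have hmono : Monotone Ψ := monotone_of_deriv_nonneg (fun s => (hΨ s).differentiableAt)
    fun s => (hΨ s).deriv ▸ div_nonneg (sq_nonneg _) (hpos s).le
  have hΨper : Periodic Ψ L := fun s => by simp only [Ψ, (hper s).1, (hper s).2]
  have hΨconst : Ψ = fun _ => Ψ 0 := funext fun t => hmono.eq_of_periodic hL hΨper t 0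
  refine eq_of_add_inv_eq_zero hx (fun s => (hpos s).ne') fun s => ?_
  have h0 : (y s + (x s)⁻¹) ^ 2 / x s = 0 :=
    (hΨ s).unique (hΨconst ▸ hasDerivAt_const s (Ψ 0))
  simpa [(hpos s).ne'] using h0

/-- For `β > 0`, the system `x' = xy + 1`, `y' = -x² + β²` has no
nonconstant periodic solution with `x > 0` everywhere: any periodic solution staying
in the right half-plane is constant. -/
theorem stmt_14 (β : ℝ) (hβ : 0 < β) (x y : ℝ → ℝ)
    (hx : ∀ s, HasDerivAt x (x s * y s + 1) s)
    (hy : ∀ s, HasDerivAt y (-(x s) ^ 2 + β ^ 2) s)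
    (hpos : ∀ s, 0 < x s)
    (L : ℝ) (hL : 0 < L)
    (hper : ∀ s, x (s + L) = x s ∧ y (s + L) = y s) :
    ∀ s t : ℝ, x s = x t ∧ y s = y t :=
  stmt_14_general β x y hx hy hpos L hL hper
end

section
/- Let β > 0 and let (x, y) solve x'(s) = x(s)y(s) + 1, y'(s) = -x(s)^2 + β² on ℝ with x(0) > 0. Then (x(s), y(s)) → (β, -1/β) as s → +∞. In other words, the fixed point (β, -1/β) is asymptotically stable in the whole right half-plane. -/
/-!
With `w = y + 1/x` the system becomes `x' = x w`, `w' = β² - x² - w/x`, and `x` stays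
positive because `x · exp (-∫ y)` is nondecreasing. The energy `E = w²/2 + x²/2 - β² log x`
decreases at rate `w²/x`, which traps `x` in a compact interval `[a, b] ⊂ (0, ∞)`. There the
perturbed energy `E + ε w (x² - β²)`, for small `ε > 0`, is comparable to `w² + (x - β)²` and its
derivative is at most `-k` times itself, so it decays exponentially and `(x, w) → (β, 0)`.
-/

open Filter Set Real Topology

lemma antitoneOn_Ici_of_hasDerivAt_nonpos {f f' : ℝ → ℝ} {a : ℝ}
    (hf : ∀ s ∈ Ici a, HasDerivAt f (f' s) s) (hf' : ∀ s ∈ Ici a, f' s ≤ 0) :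
    AntitoneOn f (Ici a) := by
  have hint : interior (Ici a) ⊆ Ici a := interior_subset
  exact antitoneOn_of_hasDerivWithinAt_nonpos (convex_Ici a)
    (fun s hs => (hf s hs).continuousAt.continuousWithinAt)
    (fun s hs => (hf s (hint hs)).hasDerivWithinAt) (fun s hs => hf' s (hint hs))

lemma le_mul_exp_of_hasDerivAt_le_neg_mul {f f' : ℝ → ℝ} {k : ℝ}
    (hf : ∀ s ∈ Ici (0 : ℝ), HasDerivAt f (f' s) s)
    (hf' : ∀ s ∈ Ici (0 : ℝ), f' s ≤ -k * f s) {s : ℝ} (hs : 0 ≤ s) :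
    f s ≤ f 0 * exp (-k * s) := by
  have hanti : AntitoneOn (fun t => f t * exp (k * t)) (Ici 0) := by
    refine antitoneOn_Ici_of_hasDerivAt_nonpos (f' := fun t => (f' t + k * f t) * exp (k * t))
      (fun t ht => ?_) fun t ht => ?_
    · exact ((hf t ht).fun_mul ((hasDerivAt_id' t).const_mul k).exp).congr_deriv (by ring)
    · exact mul_nonpos_of_nonpos_of_nonneg (by linarith [hf' t ht]) (exp_pos _).le
  have h := hanti self_mem_Ici hs hs
  simp only [mul_zero, exp_zero, mul_one] at h
  calc f s = f s * exp (k * s) * exp (-k * s) := by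
        rw [mul_assoc, ← exp_add, show k * s + -k * s = 0 by ring, exp_zero, mul_one]
    _ ≤ f 0 * exp (-k * s) := mul_le_mul_of_nonneg_right h (exp_pos _).le

lemma pos_of_hasDerivAt_mul_add {x g h : ℝ → ℝ} (hg : Continuous g)
    (hx : ∀ s, HasDerivAt x (x s * g s + h s) s) (hh : ∀ s, 0 ≤ h s) (h0 : 0 < x 0)
    {s : ℝ} (hs : 0 ≤ s) : 0 < x s := by
  set G := fun u => ∫ t in (0 : ℝ)..u, g t
  have hz : ∀ t, HasDerivAt (fun u => x u * exp (-G u)) (h t * exp (-G t)) t := fun t =>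
    ((hx t).fun_mul (hg.integral_hasStrictDerivAt 0 t).hasDerivAt.fun_neg.exp).congr_deriv (by ring)
  have hmono := monotone_of_hasDerivAt_nonneg hz fun t => mul_nonneg (hh t) (exp_pos _).le
  have h1 : x 0 ≤ x s * exp (-G s) := by
    simpa [G] using hmono hs
  exact pos_of_mul_pos_left (h0.trans_le h1) (exp_pos _).le

lemma tendsto_zero_of_sq_le {α : Type*} {l : Filter α} {u g : α → ℝ}
    (hg : Tendsto g l (𝓝 0)) (hu : ∀ᶠ t in l, u t ^ 2 ≤ g t) : Tendsto u l (𝓝 0) := by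
  have hsqrt : Tendsto (fun t => √(g t)) l (𝓝 0) := by simpa using hg.sqrt
  exact squeeze_zero_norm' (hu.mono fun t ht => by simpa using abs_le_sqrt ht) hsqrt

noncomputable section

namespace Rotator

variable {β a b ε X W : ℝ}

def potential (β X : ℝ) : ℝ := X ^ 2 / 2 - β ^ 2 * log X - (β ^ 2 / 2 - β ^ 2 * log β)

def energy (β X W : ℝ) : ℝ := W ^ 2 / 2 + potential β X

def lyapunov (β ε X W : ℝ) : ℝ := energy β X W + ε * W * (X ^ 2 - β ^ 2)

def lyapunovDeriv (β ε X W : ℝ) : ℝ :=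
  -W ^ 2 / X - ε * ((X ^ 2 - β ^ 2) ^ 2 + W * (X ^ 2 - β ^ 2) / X - 2 * X ^ 2 * W ^ 2)

lemma sq_sub_div_two_le_potential (hβ : 0 < β) (hX : 0 < X) :
    (X - β) ^ 2 / 2 ≤ potential β X := by
  have hlog := log_le_sub_one_of_pos (div_pos hX hβ)
  rw [log_div hX.ne' hβ.ne'] at hlog
  have key : β ^ 2 * (log X - log β) ≤ β * X - β ^ 2 := by
    calc β ^ 2 * (log X - log β) ≤ β ^ 2 * (X / β - 1) := by gcongr
      _ = β * X - β ^ 2 := by field_simp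
  unfold potential
  nlinarith

lemma potential_le_mul_sq (hβ : 0 < β) (ha : 0 < a) (haX : a ≤ X) :
    potential β X ≤ (1 / 2 + β / a) * (X - β) ^ 2 := by
  have hX := ha.trans_le haX
  have hlog := log_le_sub_one_of_pos (div_pos hβ hX)
  rw [log_div hβ.ne' hX.ne'] at hlog
  have key : β ^ 2 * (log β - log X) ≤ β * (X - β) ^ 2 / X - β * (X - β) := by
    calc β ^ 2 * (log β - log X) ≤ β ^ 2 * (β / X - 1) := by gcongr
      _ = β * (X - β) ^ 2 / X - β * (X - β) := by field_simp; ring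
  have hdiv : β * (X - β) ^ 2 / X ≤ β / a * (X - β) ^ 2 := by
    rw [div_mul_eq_mul_div]
    exact div_le_div_of_nonneg_left (by positivity) ha haX
  unfold potential
  nlinarith

lemma two_mul_abs_mul_sq_sub_sq_le (hβ : 0 < β) (hX : 0 < X) (hXb : X ≤ b) :
    2 * |W * (X ^ 2 - β ^ 2)| ≤ W ^ 2 + (b + β) ^ 2 * (X - β) ^ 2 := by
  have hsq : (X ^ 2 - β ^ 2) ^ 2 ≤ (b + β) ^ 2 * (X - β) ^ 2 := by
    rw [show (X ^ 2 - β ^ 2) ^ 2 = (X + β) ^ 2 * (X - β) ^ 2 by ring]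
    gcongr
  have hamgm := two_mul_le_add_sq |W| |X ^ 2 - β ^ 2|
  rw [sq_abs, sq_abs, mul_assoc, ← abs_mul] at hamgm
  linarith

lemma sq_add_sq_div_four_le_lyapunov (hβ : 0 < β) (hX : 0 < X) (hXb : X ≤ b) (hε : 0 ≤ ε)
    (hε₁ : 2 * ε ≤ 1) (hε₂ : 2 * ε * (b + β) ^ 2 ≤ 1) :
    (W ^ 2 + (X - β) ^ 2) / 4 ≤ lyapunov β ε X W := by
  have hcross := two_mul_abs_mul_sq_sub_sq_le (W := W) hβ hX hXb
  have hV := sq_sub_div_two_le_potential hβ hX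
  have hεWZ : -(ε * (W ^ 2 + (b + β) ^ 2 * (X - β) ^ 2) / 2) ≤ ε * W * (X ^ 2 - β ^ 2) := by
    rw [mul_assoc]
    nlinarith [mul_le_mul_of_nonneg_left hcross hε,
      mul_le_mul_of_nonneg_left (neg_abs_le (W * (X ^ 2 - β ^ 2))) hε]
  unfold lyapunov energy
  nlinarith [mul_nonneg (sq_nonneg (X - β)) (sub_nonneg.2 hε₂),
    mul_nonneg (sq_nonneg W) (sub_nonneg.2 hε₁)]

lemma lyapunov_le_mul_sq_add_sq (hβ : 0 < β) (ha : 0 < a) (haX : a ≤ X) (hXb : X ≤ b)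
    (hε : 0 ≤ ε) (hε₁ : ε ≤ 1) :
    lyapunov β ε X W ≤ (1 + β / a + ε * (b + β) ^ 2) * (W ^ 2 + (X - β) ^ 2) := by
  have hcross := two_mul_abs_mul_sq_sub_sq_le (W := W) hβ (ha.trans_le haX) hXb
  have hV := potential_le_mul_sq hβ ha haX
  have hεWZ : ε * W * (X ^ 2 - β ^ 2) ≤ ε * (W ^ 2 + (b + β) ^ 2 * (X - β) ^ 2) / 2 := by
    rw [mul_assoc]
    nlinarith [mul_le_mul_of_nonneg_left hcross hε,
      mul_le_mul_of_nonneg_left (le_abs_self (W * (X ^ 2 - β ^ 2))) hε]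
  have hβa : 0 ≤ β / a := by positivity
  unfold lyapunov energy
  nlinarith [mul_nonneg hβa (sq_nonneg W), mul_nonneg (sub_nonneg.2 hε₁) (sq_nonneg W),
    mul_nonneg (mul_nonneg hε (sq_nonneg (b + β))) (sq_nonneg W),
    mul_nonneg (mul_nonneg hε (sq_nonneg (b + β))) (sq_nonneg (X - β)), sq_nonneg (X - β)]

lemma lyapunovDeriv_le (hβ : 0 < β) (ha : 0 < a) (haX : a ≤ X) (hXb : X ≤ b) (hε : 0 ≤ ε)
    (hε₃ : ε * (4 * b ^ 3 + 1 / a) ≤ 1) :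
    lyapunovDeriv β ε X W ≤ -(W ^ 2 / (2 * b) + ε * β ^ 2 * (X - β) ^ 2 / 2) := by
  have hX := ha.trans_le haX
  set Z := X ^ 2 - β ^ 2 with hZ_def
  set u := X⁻¹ with hu_def
  have hXu : X * u = 1 := mul_inv_cancel₀ hX.ne'
  have hu : 0 < u := inv_pos.2 hX
  have hua : u ≤ 1 / a := by rw [one_div]; exact inv_anti₀ ha haX
  have hcross : -(W * Z * u) ≤ Z ^ 2 / 2 + W ^ 2 * u ^ 2 / 2 := by
    nlinarith [sq_nonneg (Z + W * u)]
  have hcoef : ε * (4 * X ^ 3 + u) ≤ 1 := by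
    refine le_trans ?_ hε₃
    gcongr
  have hZ : β ^ 2 * (X - β) ^ 2 ≤ Z ^ 2 := by
    rw [show Z ^ 2 = (X + β) ^ 2 * (X - β) ^ 2 by ring]
    gcongr
    linarith
  have hWb : W ^ 2 / (2 * b) ≤ W ^ 2 * u / 2 := by
    have hub : b⁻¹ ≤ u := inv_anti₀ hX hXb
    calc W ^ 2 / (2 * b) = W ^ 2 * b⁻¹ / 2 := by ring
      _ ≤ W ^ 2 * u / 2 := by gcongr
  have hX3u : X ^ 3 * u = X ^ 2 := by rw [pow_succ, mul_assoc, hXu, mul_one]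
  have hW : ε * W ^ 2 * (2 * X ^ 2 + u ^ 2 / 2) ≤ W ^ 2 * u / 2 := by
    have h := mul_le_mul_of_nonneg_left hcoef (by positivity : 0 ≤ W ^ 2 * u / 2)
    rw [← hX3u]
    linarith
  have hmain : lyapunovDeriv β ε X W ≤ -(W ^ 2 * u / 2) - ε * Z ^ 2 / 2 := by
    rw [lyapunovDeriv, div_eq_mul_inv _ X, div_eq_mul_inv _ X, ← hu_def, ← hZ_def]
    nlinarith [mul_le_mul_of_nonneg_left hcross hε]
  nlinarith [mul_le_mul_of_nonneg_left hZ hε]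

lemma exists_mem_Icc_of_potential_le (hβ : 0 < β) (P : ℝ) :
    ∃ a b : ℝ, 0 < a ∧ ∀ X, 0 < X → potential β X ≤ P → X ∈ Icc a b := by
  refine ⟨exp (-(P + β ^ 2 / 2 - β ^ 2 * log β) / β ^ 2), β + √(2 * P), exp_pos _,
    fun X hX hP => ⟨?_, ?_⟩⟩
  · rw [← exp_log hX, exp_le_exp, div_le_iff₀ (by positivity)]
    unfold potential at hP
    nlinarith [sq_nonneg X]
  · have hsq := abs_le_sqrt (show (X - β) ^ 2 ≤ 2 * P by
      linarith [sq_sub_div_two_le_potential hβ hX])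
    linarith [le_abs_self (X - β)]

lemma exists_lyapunov_decay (hβ : 0 < β) (ha : 0 < a) (hab : a ≤ b) :
    ∃ ε k : ℝ, 0 < k ∧ ∀ X ∈ Icc a b, ∀ W : ℝ,
      lyapunovDeriv β ε X W ≤ -k * lyapunov β ε X W ∧
      (W ^ 2 + (X - β) ^ 2) / 4 ≤ lyapunov β ε X W := by
  have hb := ha.trans_le hab
  have hD : 0 < 2 + 2 * (b + β) ^ 2 + (4 * b ^ 3 + 1 / a) := by positivity
  set ε := 1 / (2 + 2 * (b + β) ^ 2 + (4 * b ^ 3 + 1 / a))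
  have hεD : ε * (2 + 2 * (b + β) ^ 2 + (4 * b ^ 3 + 1 / a)) = 1 := one_div_mul_cancel hD.ne'
  have hε : 0 < ε := by positivity
  have hε₁ : 2 * ε ≤ 1 := by nlinarith [sq_nonneg (b + β), pow_pos hb 3, one_div_pos.2 ha]
  have hε₂ : 2 * ε * (b + β) ^ 2 ≤ 1 := by nlinarith [pow_pos hb 3, one_div_pos.2 ha]
  have hε₃ : ε * (4 * b ^ 3 + 1 / a) ≤ 1 := by nlinarith [sq_nonneg (b + β)]
  set C := 1 + β / a + ε * (b + β) ^ 2
  set c := min (1 / (2 * b)) (ε * β ^ 2 / 2)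
  refine ⟨ε, c / C, by positivity, fun X ⟨haX, hXb⟩ W =>
    ⟨?_, sq_add_sq_div_four_le_lyapunov hβ (ha.trans_le haX) hXb hε.le hε₁ hε₂⟩⟩
  have hL := lyapunov_le_mul_sq_add_sq (W := W) hβ ha haX hXb hε.le (by linarith)
  have hDL := lyapunovDeriv_le (W := W) hβ ha haX hXb hε.le hε₃
  have hc₁ : c ≤ 1 / (2 * b) := min_le_left _ _
  have hc₂ : c ≤ ε * β ^ 2 / 2 := min_le_right _ _
  calc lyapunovDeriv β ε X W ≤ -(c * (W ^ 2 + (X - β) ^ 2)) := by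
        linarith [mul_le_mul_of_nonneg_right hc₁ (sq_nonneg W),
          mul_le_mul_of_nonneg_right hc₂ (sq_nonneg (X - β)),
          show 1 / (2 * b) * W ^ 2 = W ^ 2 / (2 * b) by ring]
    _ ≤ -(c / C) * lyapunov β ε X W := by
        rw [neg_mul, neg_le_neg_iff, div_mul_eq_mul_div, div_le_iff₀ (by positivity)]
        rw [mul_assoc, mul_comm _ C]
        exact mul_le_mul_of_nonneg_left hL (by positivity)

section Solution

variable {x w : ℝ → ℝ} {s : ℝ}

lemma hasDerivAt_energy (hx : HasDerivAt x (x s * w s) s)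
    (hw : HasDerivAt w (β ^ 2 - x s ^ 2 - w s / x s) s) (hxs : 0 < x s) :
    HasDerivAt (fun t => energy β (x t) (w t)) (-w s ^ 2 / x s) s := by
  have h := ((hw.fun_pow 2).div_const 2).fun_add
    ((((hx.fun_pow 2).div_const 2).fun_sub ((hx.log hxs.ne').const_mul (β ^ 2))).sub_const
      (β ^ 2 / 2 - β ^ 2 * log β))
  refine h.congr_deriv ?_
  field_simp
  ring

lemma hasDerivAt_lyapunov (hx : HasDerivAt x (x s * w s) s)
    (hw : HasDerivAt w (β ^ 2 - x s ^ 2 - w s / x s) s) (hxs : 0 < x s) :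
    HasDerivAt (fun t => lyapunov β ε (x t) (w t)) (lyapunovDeriv β ε (x s) (w s)) s := by
  have h := (hasDerivAt_energy hx hw hxs).fun_add
    ((hw.const_mul ε).fun_mul ((hx.fun_pow 2).sub_const (β ^ 2)))
  refine h.congr_deriv ?_
  unfold lyapunovDeriv
  field_simp
  ring

theorem tendsto_of_hasDerivAt (hβ : 0 < β)
    (hx : ∀ s ∈ Ici (0 : ℝ), HasDerivAt x (x s * w s) s)
    (hw : ∀ s ∈ Ici (0 : ℝ), HasDerivAt w (β ^ 2 - x s ^ 2 - w s / x s) s)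
    (hpos : ∀ s ∈ Ici (0 : ℝ), 0 < x s) :
    Tendsto x atTop (𝓝 β) ∧ Tendsto w atTop (𝓝 0) := by
  have hE : AntitoneOn (fun t => energy β (x t) (w t)) (Ici 0) :=
    antitoneOn_Ici_of_hasDerivAt_nonpos
      (fun t ht => hasDerivAt_energy (hx t ht) (hw t ht) (hpos t ht))
      fun t ht => div_nonpos_of_nonpos_of_nonneg (neg_nonpos.2 (sq_nonneg _)) (hpos t ht).le
  obtain ⟨a, b, ha, hab⟩ := exists_mem_Icc_of_potential_le hβ (energy β (x 0) (w 0))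
  have hIcc : ∀ t ∈ Ici (0 : ℝ), x t ∈ Icc a b := fun t ht =>
    hab _ (hpos t ht) ((le_add_of_nonneg_left (by positivity)).trans (hE self_mem_Ici ht ht))
  obtain ⟨ε, k, hk, hdecay⟩ :=
    exists_lyapunov_decay hβ ha ((hIcc 0 self_mem_Ici).1.trans (hIcc 0 self_mem_Ici).2)
  set L := lyapunov β ε (x 0) (w 0)
  have hL : ∀ t ∈ Ici (0 : ℝ), lyapunov β ε (x t) (w t) ≤ L * exp (-k * t) := fun t ht =>
    le_mul_exp_of_hasDerivAt_le_neg_mul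
      (fun r hr => hasDerivAt_lyapunov (hx r hr) (hw r hr) (hpos r hr))
      (fun r hr => (hdecay _ (hIcc r hr) _).1) ht
  have hbound : ∀ᶠ t in atTop, w t ^ 2 + (x t - β) ^ 2 ≤ 4 * (L * exp (-k * t)) := by
    filter_upwards [eventually_ge_atTop 0] with t ht
    linarith [(hdecay _ (hIcc t ht) (w t)).2, hL t ht]
  have hg : Tendsto (fun t => 4 * (L * exp (-k * t))) atTop (𝓝 0) := by
    simpa using ((tendsto_exp_atBot.comp
      (tendsto_id.const_mul_atTop_of_neg (neg_neg_of_pos hk))).const_mul L).const_mul 4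
  have hxβ := tendsto_zero_of_sq_le (u := fun t => x t - β) hg
    (hbound.mono fun t ht => by linarith [sq_nonneg (w t)])
  exact ⟨by simpa using hxβ.add_const β,
    tendsto_zero_of_sq_le hg (hbound.mono fun t ht => by linarith [sq_nonneg (x t - β)])⟩

end Solution

end Rotator

end

/-- For `β > 0`, if `(x, y)` solves `x' = xy + 1`, `y' = -x² + β²`
on `ℝ` with `x(0) > 0`, then `(x(s), y(s)) → (β, -1/β)` as `s → +∞`: the fixed point
is asymptotically stable in the whole right half-plane. -/
theorem stmt_15 (β : ℝ) (hβ : 0 < β) (x y : ℝ → ℝ)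
    (hx : ∀ s, HasDerivAt x (x s * y s + 1) s)
    (hy : ∀ s, HasDerivAt y (-(x s) ^ 2 + β ^ 2) s)
    (h0 : 0 < x 0) :
    Tendsto (fun s => (x s, y s)) atTop (nhds (β, -1 / β)) := by
  have hpos : ∀ s ∈ Ici (0 : ℝ), 0 < x s := fun s hs =>
    pos_of_hasDerivAt_mul_add (continuous_iff_continuousAt.2 fun t => (hy t).continuousAt) hx
      (fun _ => zero_le_one) h0 hs
  set w := fun s => y s + (x s)⁻¹ with hw_def
  have hxw : ∀ s ∈ Ici (0 : ℝ), HasDerivAt x (x s * w s) s := fun s hs =>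
    (hx s).congr_deriv (by simp only [hw_def]; field_simp [(hpos s hs).ne'])
  have hw : ∀ s ∈ Ici (0 : ℝ), HasDerivAt w (β ^ 2 - x s ^ 2 - w s / x s) s := fun s hs =>
    ((hy s).fun_add ((hx s).fun_inv (hpos s hs).ne')).congr_deriv
      (by simp only [hw_def]; field_simp [(hpos s hs).ne']; ring)
  obtain ⟨hxβ, hw0⟩ := Rotator.tendsto_of_hasDerivAt hβ hxw hw hpos
  have hy' : y = fun s => w s - (x s)⁻¹ := by funext s; simp [w]
  rw [hy']
  exact hxβ.prodMk_nhds (by simpa [neg_div] using hw0.sub (hxβ.inv₀ hβ.ne'))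
end

section
/- Let (x, y) solve x'(s) = x(s)y(s), y'(s) = -x(s)^2 + 1 on ℝ (the system with A = 0, B = -1). Then the function s ↦ x(s)·e^{-(x(s)² + y(s)²)/2} is constant. -/
/-! Along a solution, `d/ds (x² + y²)/2 = x·xy + y(1 - x²) = y`, so `x' = x·u'` with
`u = (x² + y²)/2`; hence `x·e^{-u}` has derivative `x·u'·e^{-u} - x·u'·e^{-u} = 0`. -/

open Real

theorem hasDerivAt_mul_exp_neg_of_hasDerivAt_eq_mul {x u : ℝ → ℝ} {u' s : ℝ}
    (hx : HasDerivAt x (x s * u') s) (hu : HasDerivAt u u' s) :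
    HasDerivAt (fun t => x t * exp (-u t)) 0 s :=
  (hx.mul hu.neg.exp).congr_deriv (by ring)

theorem hasDerivAt_half_sq_add_sq {x y : ℝ → ℝ} {s : ℝ}
    (hx : HasDerivAt x (x s * y s) s) (hy : HasDerivAt y (-(x s) ^ 2 + 1) s) :
    HasDerivAt (fun t => ((x t) ^ 2 + (y t) ^ 2) / 2) (y s) s :=
  (((hx.pow 2).add (hy.pow 2)).div_const 2).congr_deriv (by ring)

/-- If `(x, y)` solves `x' = xy`, `y' = -x² + 1` on `ℝ` (the system with
`A = 0`, `B = -1`), then `x·e^{-(x² + y²)/2}` is constant. -/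
theorem stmt_16 (x y : ℝ → ℝ)
    (hx : ∀ s, HasDerivAt x (x s * y s) s)
    (hy : ∀ s, HasDerivAt y (-(x s) ^ 2 + 1) s) :
    ∀ s t : ℝ, x s * Real.exp (-((x s) ^ 2 + (y s) ^ 2) / 2) =
      x t * Real.exp (-((x t) ^ 2 + (y t) ^ 2) / 2) := by
  have hderiv (s : ℝ) :
      HasDerivAt (fun t => x t * exp (-(((x t) ^ 2 + (y t) ^ 2) / 2))) 0 s :=
    hasDerivAt_mul_exp_neg_of_hasDerivAt_eq_mul (hx s) (hasDerivAt_half_sq_add_sq (hx s) (hy s))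
  intro s t
  simpa only [neg_div] using
    is_const_of_deriv_eq_zero (fun u => (hderiv u).differentiableAt) (fun u => (hderiv u).deriv) s t
end

section
/- Let (x, y) solve x'(s) = x(s)y(s), y'(s) = -x(s)^2 - 1 on ℝ (the system with A = 0, B = 1), with y(0) = 0. Then x is an even function and y is an odd function: x(-s) = x(s) and y(-s) = -y(s) for all s ∈ ℝ. -/
/-!
The reflection `s ↦ (x (-s), -y (-s))` of a solution is again a solution, and when `y 0 = 0` it
has the same value at `s = 0`. The vector field is polynomial, hence locally Lipschitz, so
uniqueness of solutions of the initial value problem identifies the solution with its reflection.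
-/

open Set

/-- On a compact time interval both solutions stay in a compact set, where `v` is Lipschitz. -/
theorem ODE_solution_unique_univ_of_locallyLipschitz {E : Type*} [NormedAddCommGroup E]
    [NormedSpace ℝ E] {v : E → E} (hv : LocallyLipschitz v) {f g : ℝ → E} {t₀ : ℝ}
    (hf : ∀ t, HasDerivAt f (v (f t)) t) (hg : ∀ t, HasDerivAt g (v (g t)) t)
    (heq : f t₀ = g t₀) : f = g := by
  ext t
  obtain ⟨a, b, ht, ht₀⟩ : ∃ a b, t ∈ Ioo a b ∧ t₀ ∈ Ioo a b :=
    ⟨min t t₀ - 1, max t t₀ + 1, by constructor <;> constructor <;> grind⟩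
  have hf_cont : Continuous f := continuous_iff_continuousAt.2 fun t ↦ (hf t).continuousAt
  have hg_cont : Continuous g := continuous_iff_continuousAt.2 fun t ↦ (hg t).continuousAt
  set K := f '' Icc a b ∪ g '' Icc a b
  have hK : IsCompact K :=
    (isCompact_Icc.image hf_cont).union (isCompact_Icc.image hg_cont)
  obtain ⟨L, hL⟩ := hv.locallyLipschitzOn.exists_lipschitzOnWith_of_compact hK
  exact ODE_solution_unique_of_mem_Ioo (s := fun _ ↦ K) (fun _ _ ↦ hL) ht₀
    (fun s hs ↦ ⟨hf s, .inl (mem_image_of_mem f (Ioo_subset_Icc_self hs))⟩)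
    (fun s hs ↦ ⟨hg s, .inr (mem_image_of_mem g (Ioo_subset_Icc_self hs))⟩) heq ht

/-- The system with `A = 0`: for `A ≠ 0` the reflected curve solves the system with `-A`. -/
def expanderField (B : ℝ) (p : ℝ × ℝ) : ℝ × ℝ := (p.1 * p.2, -p.1 ^ 2 - B)

theorem locallyLipschitz_expanderField (B : ℝ) : LocallyLipschitz (expanderField B) := by
  have : ContDiff ℝ 1 (expanderField B) := by unfold expanderField; fun_prop
  exact this.locallyLipschitz

section Reflection

variable {B : ℝ} {x y : ℝ → ℝ}

theorem hasDerivAt_reflect_expanderField (hx : ∀ s, HasDerivAt x (x s * y s) s)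
    (hy : ∀ s, HasDerivAt y (-(x s) ^ 2 - B) s) (s : ℝ) :
    HasDerivAt (fun t ↦ (x (-t), -y (-t))) (expanderField B (x (-s), -y (-s))) s := by
  have hx' := (hx (-s)).comp s (hasDerivAt_neg s)
  have hy' := ((hy (-s)).comp s (hasDerivAt_neg s)).neg
  refine (hx'.prodMk hy').congr_deriv ?_
  simp only [expanderField, Prod.mk.injEq]
  constructor <;> ring

theorem even_odd_of_expanderField (hx : ∀ s, HasDerivAt x (x s * y s) s)
    (hy : ∀ s, HasDerivAt y (-(x s) ^ 2 - B) s) (h0 : y 0 = 0) (s : ℝ) :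
    x (-s) = x s ∧ y (-s) = -y s := by
  have h := congrFun (ODE_solution_unique_univ_of_locallyLipschitz
    (locallyLipschitz_expanderField B) (t₀ := 0) (fun s ↦ (hx s).prodMk (hy s))
    (hasDerivAt_reflect_expanderField hx hy) (by simp [h0])) s
  simp only [Prod.mk.injEq] at h
  exact ⟨h.1.symm, by linarith [h.2]⟩

end Reflection

/-- If `(x, y)` solves `x' = xy`, `y' = -x² - 1` on `ℝ` (the system with
`A = 0`, `B = 1`) with `y(0) = 0`, then `x` is even and `y` is odd. -/
theorem stmt_18 (x y : ℝ → ℝ)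
    (hx : ∀ s, HasDerivAt x (x s * y s) s)
    (hy : ∀ s, HasDerivAt y (-(x s) ^ 2 - 1) s)
    (h0 : y 0 = 0) :
    ∀ s, x (-s) = x s ∧ y (-s) = -y s :=
  even_odd_of_expanderField hx hy h0
end

section
/- Let (x, y) solve x'(s) = x(s)y(s), y'(s) = -x(s)^2 - 1 on ℝ (the system with A = 0, B = 1), with x(0) > 0. Then x(s) > 0 for all s, x is integrable on ℝ, and the total curvature satisfies ∫_{-∞}^{∞} x(s) ds < π. -/
open MeasureTheory Real Filter

/-!
Since `x' = x y`, the curvature is `x(0)` times an exponential, hence positive. The angle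
`θ = arctan (y / x)` satisfies `θ' = -(x + x / (x² + y²))`, so on every interval the integral of
`x + x / (x² + y²)` is a difference of two values of `arctan`, hence less than `π`. This dominating
function is therefore integrable with integral at most `π`, and `x` lies strictly below it.
-/

theorem eq_mul_exp_integral_of_hasDerivAt_mul {x y : ℝ → ℝ} (hy : Continuous y)
    (hx : ∀ s, HasDerivAt x (x s * y s) s) (s : ℝ) :
    x s = x 0 * exp (∫ t in (0 : ℝ)..s, y t) := by
  set Y : ℝ → ℝ := fun s => ∫ t in (0 : ℝ)..s, y t
  have hY : ∀ s, HasDerivAt Y (y s) s := fun s => (hy.integral_hasStrictDerivAt 0 s).hasDerivAt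
  have hderiv : ∀ s, HasDerivAt (fun s => x s * exp (-Y s)) 0 s := fun s =>
    ((hx s).mul (hY s).neg.exp).congr_deriv (by ring)
  have hconst : x s * exp (-Y s) = x 0 * exp (-Y 0) :=
    is_const_of_deriv_eq_zero (fun t => (hderiv t).differentiableAt) (fun t => (hderiv t).deriv) s 0
  have hY0 : Y 0 = 0 := intervalIntegral.integral_same
  calc x s = x s * exp (-Y s) * exp (Y s) := by rw [mul_assoc, ← exp_add]; simp
    _ = x 0 * exp (Y s) := by rw [hconst, hY0]; simp

theorem pos_of_hasDerivAt_mul {x y : ℝ → ℝ} (hy : Continuous y)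
    (hx : ∀ s, HasDerivAt x (x s * y s) s) (h0 : 0 < x 0) (s : ℝ) : 0 < x s := by
  rw [eq_mul_exp_integral_of_hasDerivAt_mul hy hx s]
  positivity

theorem hasDerivAt_arctan_div {x y : ℝ → ℝ} {B s : ℝ} (hxs : HasDerivAt x (x s * y s) s)
    (hys : HasDerivAt y (-x s ^ 2 - B) s) (hs : x s ≠ 0) :
    HasDerivAt (fun s => arctan (y s / x s)) (-(x s + B * x s / (x s ^ 2 + y s ^ 2))) s := by
  refine ((hasDerivAt_arctan _).comp s (hys.div hxs hs)).congr_deriv ?_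
  have hr : x s ^ 2 + y s ^ 2 ≠ 0 := by positivity
  simp only [Pi.div_apply]
  field_simp
  ring

theorem intervalIntegral_add_mul_div_lt_pi {x y : ℝ → ℝ} {B : ℝ}
    (hx : ∀ s, HasDerivAt x (x s * y s) s) (hy : ∀ s, HasDerivAt y (-x s ^ 2 - B) s)
    (hx0 : ∀ s, x s ≠ 0) (a b : ℝ) :
    ∫ s in a..b, (x s + B * x s / (x s ^ 2 + y s ^ 2)) < π := by
  have hxc : Continuous x := continuous_iff_continuousAt.2 fun s => (hx s).continuousAt
  have hyc : Continuous y := continuous_iff_continuousAt.2 fun s => (hy s).continuousAt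
  have hr : ∀ s, x s ^ 2 + y s ^ 2 ≠ 0 := fun s => by have := hx0 s; positivity
  have hint : IntervalIntegrable (fun s => -(x s + B * x s / (x s ^ 2 + y s ^ 2))) volume a b :=
    (hxc.add ((continuous_const.mul hxc).div (by fun_prop) hr)).neg.intervalIntegrable a b
  have hFTC := intervalIntegral.integral_eq_sub_of_hasDerivAt
    (fun s _ => hasDerivAt_arctan_div (hx s) (hy s) (hx0 s)) hint
  rw [intervalIntegral.integral_neg] at hFTC
  linarith [arctan_lt_pi_div_two (y a / x a), neg_pi_div_two_lt_arctan (y b / x b)]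

theorem integrable_and_integral_le_of_intervalIntegral_le {f : ℝ → ℝ} {C : ℝ}
    (hf : LocallyIntegrable f) (hf0 : ∀ s, 0 ≤ f s) (hC : ∀ a b, a ≤ b → ∫ s in a..b, f s ≤ C) :
    Integrable f ∧ ∫ s, f s ≤ C := by
  have hbot : Tendsto (fun n : ℕ => -(n : ℝ)) atTop atBot :=
    tendsto_neg_atBot_iff.mpr tendsto_natCast_atTop_atTop
  have hle : ∀ n : ℕ, ∫ s in -(n : ℝ)..n, f s ≤ C := fun n =>
    hC _ _ (neg_le_self n.cast_nonneg)
  have hfi : Integrable f := by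
    refine integrable_of_intervalIntegral_norm_bounded C
      (fun n => (hf.integrableOn_isCompact isCompact_Icc).mono_set Set.Ioc_subset_Icc_self)
      hbot tendsto_natCast_atTop_atTop (Eventually.of_forall fun n => ?_)
    simpa only [Real.norm_of_nonneg (hf0 _)] using hle n
  exact ⟨hfi, le_of_tendsto (intervalIntegral_tendsto_integral hfi hbot tendsto_natCast_atTop_atTop)
    (Eventually.of_forall hle)⟩

/-- If `(x, y)` solves `x' = xy`, `y' = -x² - 1` on `ℝ` (the system with
`A = 0`, `B = 1`) with `x(0) > 0`, then `x > 0` everywhere, `x` is integrable on `ℝ`,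
and the total curvature satisfies `∫_{-∞}^{∞} x < π`. -/
theorem stmt_19 (x y : ℝ → ℝ)
    (hx : ∀ s, HasDerivAt x (x s * y s) s)
    (hy : ∀ s, HasDerivAt y (-(x s) ^ 2 - 1) s)
    (h0 : 0 < x 0) :
    (∀ s, 0 < x s) ∧ Integrable x ∧ (∫ s, x s) < Real.pi := by
  have hxc : Continuous x := continuous_iff_continuousAt.2 fun s => (hx s).continuousAt
  have hyc : Continuous y := continuous_iff_continuousAt.2 fun s => (hy s).continuousAt
  have hpos : ∀ s, 0 < x s := pos_of_hasDerivAt_mul hyc hx h0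
  -- `1 *` matches the integrand of `intervalIntegral_add_mul_div_lt_pi` at `B = 1`
  set g : ℝ → ℝ := fun s => 1 * x s / (x s ^ 2 + y s ^ 2)
  have hgc : Continuous g :=
    (continuous_const.mul hxc).div (by fun_prop) fun s => by have := hpos s; positivity
  have hg : ∀ s, 0 < g s := fun s => by have := hpos s; positivity
  obtain ⟨hfi, hfC⟩ := integrable_and_integral_le_of_intervalIntegral_le
    (f := fun s => x s + g s) (hxc.add hgc).locallyIntegrable
    (fun s => (add_pos (hpos s) (hg s)).le)
    fun a b _ => (intervalIntegral_add_mul_div_lt_pi hx hy (fun s => (hpos s).ne') a b).le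
  have hxi : Integrable x := hfi.mono' hxc.aestronglyMeasurable <| Eventually.of_forall fun s => by
    rw [Real.norm_of_nonneg (hpos s).le]; linarith [hg s]
  have hgi : Integrable g :=
    (hfi.sub hxi).congr (Eventually.of_forall fun s => add_sub_cancel_left (x s) (g s))
  have hgpos : 0 < ∫ s, g s :=
    integral_pos_of_integrable_nonneg_nonzero hgc hgi (fun s => (hg s).le) (hg 0).ne'
  refine ⟨hpos, hxi, ?_⟩
  rw [integral_add hxi hgi] at hfC
  linarith
end
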